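/- arXiv:1905.04827 — 2 statements merged into one kernel-verified Lean document; each statement's English description precedes it below -/
import Mathlib

section
/- Let ξ ∈ P(α), where either α = 2, or α > 2 and E[ξ²] > 3·E[ξ]. Let ξ₁, …, ξ_n be i.i.d. copies of ξ; for each i define d_i⁺ and d_i⁻ by letting d_i⁺ be conditionally Binomial(ξ_i, 1/2) given ξ_i and d_i⁻ = ξ_i − d_i⁺, with these binomial splits independent across i. Set S_n = Σ_{i=1}^n ξ_i and T_n = Σ_{i=1}^n d_i⁺·d_i⁻. Then there exists a constant ε > 0 such that Pr[2·T_n > (1+ε)·S_n] → 1 as n → ∞. -/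
open MeasureTheory ProbabilityTheory Filter
open scoped ENNReal NNReal

namespace RandomSat

/-- The tail function `F_ξ(ℓ) = Pr[ξ ≥ ℓ]` of a distribution on `ℕ`. -/
noncomputable def tail (ξ : PMF ℕ) (ℓ : ℕ) : ℝ≥0∞ :=
  ∑' j : ℕ, if ℓ ≤ j then ξ j else 0

/-- The `m`-th moment `E[ξ^m]` of a distribution on `ℕ`. -/
noncomputable def moment (ξ : PMF ℕ) (m : ℕ) : ℝ≥0∞ :=
  ∑' j : ℕ, (j : ℝ≥0∞) ^ m * ξ j

/-- `ξ ∈ P(α)`: a positive integer-valued distribution whose tail function is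
sandwiched between two power laws with exponent `α > 0`. -/
def IsPowerLaw (ξ : PMF ℕ) (α : ℝ) : Prop :=
  0 < α ∧ ξ 0 = 0 ∧ ∃ W V : ℝ, 0 < W ∧ W ≤ V ∧
    ∀ ℓ : ℕ, 1 ≤ ℓ →
      ENNReal.ofReal (W * (ℓ : ℝ) ^ (-α)) ≤ tail ξ ℓ ∧
      tail ξ ℓ ≤ ENNReal.ofReal (V * (ℓ : ℝ) ^ (-α))

/-- `dp` is conditionally `Binomial(ξ, 1/2)` given `ξ`: for all `k, ℓ`,
`Pr[dp = k ∧ ξ = ℓ] = C(ℓ, k) 2^{−ℓ} Pr[ξ = ℓ]`. -/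
def CondBinomHalf {Ω : Type*} [MeasurableSpace Ω] (P : Measure Ω)
    (ξ dp : Ω → ℕ) : Prop :=
  ∀ k ℓ : ℕ, P {ω | dp ω = k ∧ ξ ω = ℓ} =
    ((ℓ.choose k : ℝ≥0∞) / 2 ^ ℓ) * P {ω | ξ ω = ℓ}

/-! ### Auxiliary definitions: the joint law of `(ξ, d⁺)` -/

/-- Joint point mass of `(ξ, d⁺)` at `z = (ℓ, k)`. -/
noncomputable def pj (ξ : PMF ℕ) (z : ℕ × ℕ) : ℝ≥0∞ :=
  ((z.1.choose z.2 : ℕ) : ℝ≥0∞) / 2 ^ z.1 * ξ z.1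

/-- Expectation of `f (ξ, d⁺)` under the joint law. -/
noncomputable def ev (ξ : PMF ℕ) (f : ℕ × ℕ → ℕ) : ℝ≥0∞ :=
  ∑' z : ℕ × ℕ, (f z : ℝ≥0∞) * pj ξ z

/-! ### Binomial identities -/

lemma sum_choose_mul (m : ℕ) :
    ∑ k ∈ Finset.range (m + 1), k * m.choose k = m * 2 ^ (m - 1) := by
  cases m with
  | zero => simp
  | succ m =>
    rw [Finset.sum_range_succ']
    simp only [Nat.zero_mul, Nat.add_zero]
    have : ∀ k, (k + 1) * (m + 1).choose (k + 1) = (m + 1) * m.choose k := by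
      intro k
      rw [mul_comm (k+1)]
      exact (Nat.add_one_mul_choose_eq m k).symm
    rw [Finset.sum_congr rfl fun k _ => this k, ← Finset.mul_sum, Nat.sum_range_choose]
    simp

lemma sum_k_lk_choose (ℓ : ℕ) :
    4 * ∑ k ∈ Finset.range (ℓ + 1), k * (ℓ - k) * ℓ.choose k = ℓ * (ℓ - 1) * 2 ^ ℓ := by
  cases ℓ with
  | zero => simp
  | succ m =>
    have h1 : ∑ k ∈ Finset.range (m + 2), k * (m + 1 - k) * (m+1).choose k
        = (m + 1) * ∑ k ∈ Finset.range (m + 1), (m - k) * m.choose k := by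
      rw [Finset.sum_range_succ']
      simp only [Nat.zero_mul, Nat.add_zero]
      rw [Finset.mul_sum]
      refine Finset.sum_congr rfl fun k hk => ?_
      have : (k + 1) * (m + 1).choose (k + 1) = (m + 1) * m.choose k := by
        rw [mul_comm (k+1)]; exact (Nat.add_one_mul_choose_eq m k).symm
      calc (k+1) * (m + 1 - (k+1)) * (m+1).choose (k+1)
          = (m - k) * ((k+1) * (m+1).choose (k+1)) := by
            rw [Nat.succ_sub_succ]; ring
        _ = (m - k) * ((m+1) * m.choose k) := by rw [this]
        _ = (m+1) * ((m - k) * m.choose k) := by ring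
    have h2 : ∑ k ∈ Finset.range (m + 1), (m - k) * m.choose k
        = ∑ k ∈ Finset.range (m + 1), k * m.choose k := by
      rw [← Finset.sum_range_reflect]
      refine Finset.sum_congr rfl fun k hk => ?_
      have hk' : k ≤ m := by simpa [Nat.lt_succ_iff] using hk
      rw [Nat.succ_sub_one, Nat.sub_sub_self hk', Nat.choose_symm hk']
    rw [h1, h2, sum_choose_mul]
    cases m with
    | zero => simp
    | succ m' => simp [Nat.succ_sub_one]; ring

/-! ### tsum computations over the joint law -/

lemma tsum_choose_ennreal (ℓ : ℕ) :
    ∑' k : ℕ, ((ℓ.choose k : ℕ) : ℝ≥0∞) = 2 ^ ℓ := by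
  rw [tsum_eq_sum (s := Finset.range (ℓ + 1))
    (fun k hk => by
      have : ℓ < k := by simpa [Nat.lt_succ_iff] using hk
      simp [Nat.choose_eq_zero_of_lt this])]
  rw [← Nat.cast_sum, Nat.sum_range_choose]
  push_cast
  ring

lemma pow_two_ne_top (ℓ : ℕ) : ((2:ℝ≥0∞) ^ ℓ) ≠ ⊤ :=
  ENNReal.pow_ne_top (by norm_num)

lemma ev_marg (ξ : PMF ℕ) (g : ℕ → ℕ) :
    ev ξ (fun z => g z.1) = ∑' ℓ : ℕ, (g ℓ : ℝ≥0∞) * ξ ℓ := by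
  rw [ev, ENNReal.tsum_prod']
  refine tsum_congr fun ℓ => ?_
  have : ∀ k:ℕ, ((g ℓ : ℝ≥0∞)) * pj ξ (ℓ, k)
      = ((g ℓ : ℝ≥0∞) * ξ ℓ * (2 ^ ℓ)⁻¹) * ((ℓ.choose k : ℕ) : ℝ≥0∞) := by
    intro k
    simp only [pj, div_eq_mul_inv]
    ring
  simp only [this]
  rw [ENNReal.tsum_mul_left, tsum_choose_ennreal, mul_assoc,
    ENNReal.inv_mul_cancel (by positivity) (pow_two_ne_top ℓ), mul_one]

lemma pj_tsum (ξ : PMF ℕ) : ∑' z : ℕ × ℕ, pj ξ z = 1 := by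
  have := ev_marg ξ (fun _ => 1)
  simpa [ev, ξ.tsum_coe] using this

lemma ev_mono (ξ : PMF ℕ) {f g : ℕ × ℕ → ℕ} (h : ∀ z, f z ≤ g z) :
    ev ξ f ≤ ev ξ g :=
  ENNReal.tsum_le_tsum fun z => mul_le_mul_left (by exact_mod_cast h z) _

lemma ev_le_const (ξ : PMF ℕ) (f : ℕ × ℕ → ℕ) (C : ℕ) (h : ∀ z, f z ≤ C) :
    ev ξ f ≤ C := by
  calc ev ξ f ≤ ∑' z : ℕ × ℕ, (C : ℝ≥0∞) * pj ξ z :=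
        ENNReal.tsum_le_tsum fun z => mul_le_mul_left (by exact_mod_cast h z) _
    _ = C := by rw [ENNReal.tsum_mul_left, pj_tsum, mul_one]

lemma ev_add (ξ : PMF ℕ) (f g : ℕ × ℕ → ℕ) :
    ev ξ (fun z => f z + g z) = ev ξ f + ev ξ g := by
  rw [ev, ev, ev, ← ENNReal.tsum_add]
  refine tsum_congr fun z => ?_
  push_cast
  ring

/-- monotone convergence for truncations -/
lemma ev_sup_min (ξ : PMF ℕ) (f : ℕ × ℕ → ℕ) :
    ⨆ M : ℕ, ev ξ (fun z => min (f z) M) = ev ξ f := by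
  have h1 : ∀ M : ℕ, ev ξ (fun z => min (f z) M)
      = ∫⁻ z, ((min (f z) M : ℕ) : ℝ≥0∞) * pj ξ z ∂(Measure.count) := by
    intro M; rw [lintegral_count]; rfl
  have h2 : ev ξ f = ∫⁻ z, ((f z : ℕ) : ℝ≥0∞) * pj ξ z ∂(Measure.count) := by
    rw [lintegral_count]; rfl
  simp only [h1, h2]
  rw [← lintegral_iSup]
  · congr 1
    ext z
    rw [← ENNReal.iSup_mul]
    congr 1
    refine le_antisymm (iSup_le fun M => by exact_mod_cast Nat.cast_le.mpr (min_le_left _ _)) ?_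
    exact le_iSup_of_le (f z) (by simp)
  · exact fun M => measurable_of_countable _
  · intro M M' hMM' z
    exact mul_le_mul_left (by exact_mod_cast Nat.cast_le.mpr (min_le_min le_rfl hMM')) _

/-- the expectation of `4 d⁺ d⁻` -/
lemma ev_Y (ξ : PMF ℕ) :
    4 * ev ξ (fun z => z.2 * (z.1 - z.2)) = ∑' ℓ : ℕ, ((ℓ * (ℓ - 1) : ℕ) : ℝ≥0∞) * ξ ℓ := by
  rw [ev, ENNReal.tsum_prod', ← ENNReal.tsum_mul_left]
  refine tsum_congr fun ℓ => ?_
  rw [← ENNReal.tsum_mul_left]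
  have : ∀ k:ℕ, (4:ℝ≥0∞) * (((k * (ℓ - k) : ℕ) : ℝ≥0∞) * pj ξ (ℓ, k))
      = (ξ ℓ * (2 ^ ℓ)⁻¹) * ((4 * (k * (ℓ - k) * ℓ.choose k) : ℕ) : ℝ≥0∞) := by
    intro k
    simp only [pj, div_eq_mul_inv]
    push_cast
    ring
  simp only [this]
  rw [ENNReal.tsum_mul_left]
  have hs : ∑' k:ℕ, ((4 * (k * (ℓ - k) * ℓ.choose k) : ℕ) : ℝ≥0∞)
      = ((ℓ * (ℓ - 1) * 2 ^ ℓ : ℕ) : ℝ≥0∞) := by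
    rw [tsum_eq_sum (s := Finset.range (ℓ + 1))
      (fun k hk => by
        have : ℓ < k := by simpa [Nat.lt_succ_iff] using hk
        simp [Nat.choose_eq_zero_of_lt this])]
    rw [← Nat.cast_sum, ← Finset.mul_sum, sum_k_lk_choose]
  rw [hs, Nat.cast_mul (ℓ * (ℓ - 1)), Nat.cast_pow, Nat.cast_ofNat]
  have h2 : ξ ℓ * (2 ^ ℓ)⁻¹ * (((ℓ * (ℓ - 1) : ℕ) : ℝ≥0∞) * 2 ^ ℓ)
      = ((ℓ * (ℓ - 1) : ℕ) : ℝ≥0∞) * ξ ℓ * ((2 ^ ℓ)⁻¹ * 2 ^ ℓ) := by ring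
  rw [h2, ENNReal.inv_mul_cancel (by positivity) (pow_two_ne_top ℓ), mul_one]

lemma moment_one_eq_ev (ξ : PMF ℕ) : ev ξ (fun z => z.1) = moment ξ 1 := by
  rw [show (fun z : ℕ × ℕ => z.1) = (fun z : ℕ × ℕ => id z.1) from rfl, ev_marg]
  simp [moment]

lemma moment_two_split (ξ : PMF ℕ) :
    moment ξ 2 = (∑' ℓ : ℕ, ((ℓ * (ℓ - 1) : ℕ) : ℝ≥0∞) * ξ ℓ) + moment ξ 1 := by
  rw [moment, moment, ← ENNReal.tsum_add]
  refine tsum_congr fun j => ?_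
  have hj : j * (j - 1) + j = j ^ 2 := by cases j with
    | zero => rfl
    | succ n => simp [Nat.succ_sub_one]; ring
  rw [← add_mul]
  congr 1
  rw [pow_one]
  symm
  calc ((j * (j - 1) : ℕ) : ℝ≥0∞) + (j : ℝ≥0∞) = ((j * (j - 1) + j : ℕ) : ℝ≥0∞) := by
        push_cast; ring
    _ = ((j ^ 2 : ℕ) : ℝ≥0∞) := by rw [hj]
    _ = (j : ℝ≥0∞) ^ 2 := by push_cast; ring

/-! ### Tail estimates -/

lemma tail_swap (ξ : PMF ℕ) (w : ℕ → ℝ≥0∞) :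
    ∑' ℓ : ℕ, w ℓ * tail ξ (ℓ + 1) = ∑' j : ℕ, (∑ ℓ ∈ Finset.range j, w ℓ) * ξ j := by
  have h1 : ∀ ℓ : ℕ, w ℓ * tail ξ (ℓ + 1) = ∑' j : ℕ, if ℓ < j then w ℓ * ξ j else 0 := by
    intro ℓ
    rw [tail, ← ENNReal.tsum_mul_left]
    refine tsum_congr fun j => ?_
    by_cases h : ℓ + 1 ≤ j <;> simp [h, Nat.lt_iff_add_one_le]
  simp only [h1]
  rw [ENNReal.tsum_comm]
  refine tsum_congr fun j => ?_
  rw [tsum_eq_sum (s := Finset.range j) (fun ℓ hℓ => by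
    have : ¬ ℓ < j := by simpa using hℓ
    simp [this])]
  rw [Finset.sum_mul]
  refine Finset.sum_congr rfl fun ℓ hℓ => ?_
  have : ℓ < j := Finset.mem_range.mp hℓ
  simp [this]

lemma moment_one_eq_tail (ξ : PMF ℕ) : moment ξ 1 = ∑' ℓ : ℕ, tail ξ (ℓ + 1) := by
  have := tail_swap ξ (fun _ => 1)
  simp only [one_mul, Finset.sum_const, Finset.card_range, smul_eq_mul, mul_one] at this
  rw [moment, this]
  exact tsum_congr fun j => by simp

lemma moment_one_lt_top {ξ : PMF ℕ} {α : ℝ} (hα : 2 ≤ α) (hξ : IsPowerLaw ξ α) :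
    moment ξ 1 < ⊤ := by
  obtain ⟨hα0, h0, W, V, hW, hWV, hb⟩ := hξ
  have hV : 0 ≤ V := le_trans hW.le hWV
  rw [moment_one_eq_tail]
  have hsum : Summable (fun ℓ : ℕ => V * ((ℓ : ℝ) + 1) ^ (-2 : ℝ)) := by
    apply Summable.mul_left
    have : Summable (fun ℓ : ℕ => ((ℓ : ℝ)) ^ (-2 : ℝ)) := by
      rw [Real.summable_nat_rpow]; norm_num
    have h2 := (summable_nat_add_iff 1).mpr this
    refine h2.congr fun ℓ => ?_
    push_cast
    ring_nf
  calc ∑' ℓ : ℕ, tail ξ (ℓ + 1)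
      ≤ ∑' ℓ : ℕ, ENNReal.ofReal (V * ((ℓ : ℝ) + 1) ^ (-2 : ℝ)) := by
        refine ENNReal.tsum_le_tsum fun ℓ => ?_
        refine le_trans ((hb (ℓ+1) (by omega)).2) (ENNReal.ofReal_le_ofReal ?_)
        have hbase : (1:ℝ) ≤ ((ℓ+1 : ℕ) : ℝ) := by exact_mod_cast Nat.succ_le_succ (Nat.zero_le ℓ)
        have := Real.rpow_le_rpow_of_exponent_le hbase (by linarith : -α ≤ -2)
        push_cast at this ⊢
        exact mul_le_mul_of_nonneg_left this hV
    _ = ENNReal.ofReal (∑' ℓ : ℕ, V * ((ℓ : ℝ) + 1) ^ (-2 : ℝ)) := by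
        rw [ENNReal.ofReal_tsum_of_nonneg (fun ℓ => by positivity) hsum]
    _ < ⊤ := ENNReal.ofReal_lt_top

lemma moment_one_ge (ξ : PMF ℕ) (h0 : ξ 0 = 0) : 1 ≤ moment ξ 1 := by
  rw [← ξ.tsum_coe, moment]
  refine ENNReal.tsum_le_tsum fun j => ?_
  cases j with
  | zero => simp [h0]
  | succ n =>
    rw [pow_one]
    calc ξ (n+1) = 1 * ξ (n+1) := (one_mul _).symm
      _ ≤ ((n+1 : ℕ) : ℝ≥0∞) * ξ (n+1) := by
          refine mul_le_mul_left ?_ _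
          exact_mod_cast Nat.succ_le_succ (Nat.zero_le n)

lemma sum_range_succ_le_sq (j : ℕ) : ∑ ℓ ∈ Finset.range j, (ℓ + 1) ≤ j ^ 2 := by
  induction j with
  | zero => simp
  | succ n ih =>
    rw [Finset.sum_range_succ]
    nlinarith

lemma moment_two_top {ξ : PMF ℕ} (hξ : IsPowerLaw ξ 2) : moment ξ 2 = ⊤ := by
  obtain ⟨hα0, h0, W, V, hW, hWV, hb⟩ := hξ
  have key : (⊤ : ℝ≥0∞) ≤ ∑' ℓ : ℕ, ((ℓ : ℝ≥0∞) + 1) * tail ξ (ℓ + 1) := by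
    have hlb : ∀ ℓ : ℕ, ENNReal.ofReal (W * ((ℓ:ℝ) + 1)⁻¹) ≤ ((ℓ : ℝ≥0∞) + 1) * tail ξ (ℓ + 1) := by
      intro ℓ
      have h1 := (hb (ℓ+1) (by omega)).1
      have hx : (0:ℝ) < ((ℓ:ℝ) + 1) := by positivity
      have hr : ((ℓ:ℝ)+1) * (W * ((ℓ+1:ℕ):ℝ) ^ (-(2:ℝ))) = W * ((ℓ:ℝ) + 1)⁻¹ := by
        push_cast
        rw [show ((ℓ:ℝ)+1) * (W * ((ℓ:ℝ)+1) ^ (-(2:ℝ))) = W * (((ℓ:ℝ)+1) ^ (1:ℝ) * ((ℓ:ℝ)+1) ^ (-(2:ℝ))) by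
          rw [Real.rpow_one]; ring]
        rw [← Real.rpow_add hx, show (1:ℝ) + -2 = -1 by norm_num, Real.rpow_neg_one]
      calc ENNReal.ofReal (W * ((ℓ:ℝ) + 1)⁻¹)
          = ENNReal.ofReal (((ℓ:ℝ)+1) * (W * ((ℓ+1:ℕ):ℝ) ^ (-(2:ℝ)))) := by rw [hr]
        _ = ENNReal.ofReal ((ℓ:ℝ)+1) * ENNReal.ofReal (W * ((ℓ+1:ℕ):ℝ) ^ (-(2:ℝ))) := by
            rw [ENNReal.ofReal_mul hx.le]
        _ ≤ ((ℓ : ℝ≥0∞) + 1) * tail ξ (ℓ + 1) := by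
            refine mul_le_mul' ?_ h1
            rw [ENNReal.ofReal_add (by positivity) zero_le_one]
            simp [ENNReal.ofReal_natCast]
    refine le_trans ?_ (ENNReal.tsum_le_tsum hlb)
    rw [top_le_iff]
    by_contra h
    have hsum := ENNReal.summable_toReal h
    have : Summable (fun ℓ : ℕ => W * ((ℓ:ℝ) + 1)⁻¹) := by
      refine hsum.congr fun ℓ => ?_
      rw [ENNReal.toReal_ofReal (by positivity)]
    have h2 : Summable (fun ℓ : ℕ => ((ℓ:ℝ) + 1)⁻¹) := by
      have := this.mul_left W⁻¹
      refine this.congr fun ℓ => ?_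
      field_simp
    have h3 : Summable (fun ℓ : ℕ => 1 / ((ℓ:ℝ) + 1)) := by
      refine h2.congr fun ℓ => ?_
      rw [one_div]
    exact (mt (summable_nat_add_iff 1).mp Real.not_summable_one_div_natCast)
      (by exact_mod_cast h3)
  have step2 : ∑' ℓ : ℕ, ((ℓ : ℝ≥0∞) + 1) * tail ξ (ℓ + 1) ≤ moment ξ 2 := by
    have hsw := tail_swap ξ (fun ℓ => (ℓ : ℝ≥0∞) + 1)
    rw [hsw, moment]
    refine ENNReal.tsum_le_tsum fun j => ?_
    refine mul_le_mul_left ?_ _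
    calc ∑ ℓ ∈ Finset.range j, ((ℓ : ℝ≥0∞) + 1)
        = ((∑ ℓ ∈ Finset.range j, (ℓ + 1) : ℕ) : ℝ≥0∞) := by push_cast; rfl
      _ ≤ ((j ^ 2 : ℕ) : ℝ≥0∞) := by exact_mod_cast sum_range_succ_le_sq j
      _ = (j : ℝ≥0∞) ^ 2 := by push_cast; rfl
  exact top_le_iff.mp (le_trans key step2)

/-! ### Evaluation of integrals via the joint law -/

section Eval

variable {Ωn : Type*} [MeasurableSpace Ωn] (Pn : Measure Ωn) (ξ : PMF ℕ)
  (Xv Dv : Ωn → ℕ) (hXm : Measurable Xv) (hDm : Measurable Dv)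
  (hlaw : Measure.map Xv Pn = ξ.toMeasure)
  (hcb : CondBinomHalf Pn Xv Dv)

include hXm hDm hlaw hcb in
lemma lint_eval (f : ℕ × ℕ → ℝ≥0∞) :
    ∫⁻ ω, f (Xv ω, Dv ω) ∂Pn = ∑' z : ℕ × ℕ, f z * pj ξ z := by
  have hpair : Measurable fun ω => (Xv ω, Dv ω) := hXm.prodMk hDm
  rw [← lintegral_map (measurable_of_countable f) hpair, lintegral_countable']
  refine tsum_congr fun z => ?_
  congr 1
  rw [Measure.map_apply hpair (measurableSet_singleton z)]
  have hset : (fun ω => (Xv ω, Dv ω)) ⁻¹' {z} = {ω | Dv ω = z.2 ∧ Xv ω = z.1} := by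
    ext ω
    simp [Prod.ext_iff, and_comm]
  rw [hset, hcb z.2 z.1, pj]
  congr 1
  have : Xv ⁻¹' {z.1} = {ω | Xv ω = z.1} := rfl
  rw [← this, ← Measure.map_apply hXm (measurableSet_singleton z.1), hlaw,
    PMF.toMeasure_apply_singleton _ _ (measurableSet_singleton z.1)]

include hXm hDm hlaw hcb in
lemma integral_eval [IsProbabilityMeasure Pn] (f : ℕ × ℕ → ℕ) :
    ∫ ω, (f (Xv ω, Dv ω) : ℝ) ∂Pn = (ev ξ f).toReal := by
  have hpair : Measurable fun ω => (Xv ω, Dv ω) := hXm.prodMk hDm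
  have hmeas : Measurable fun ω => (f (Xv ω, Dv ω) : ℝ) :=
    (measurable_of_countable (fun z => (f z : ℝ))).comp hpair
  rw [integral_eq_lintegral_of_nonneg_ae (Filter.Eventually.of_forall fun ω => by positivity)
    hmeas.aestronglyMeasurable]
  congr 1
  rw [ev, ← lint_eval Pn ξ Xv Dv hXm hDm hlaw hcb (fun z => ((f z : ℕ) : ℝ≥0∞))]
  refine lintegral_congr fun ω => ?_
  exact ENNReal.ofReal_natCast _

end Eval

/-! ### Chebyshev and Markov bounds for i.i.d. sums -/

section Cheby

variable {Ωn : Type*} [MeasurableSpace Ωn] (Pn : Measure Ωn) [IsProbabilityMeasure Pn]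
  (ξ : PMF ℕ) {n : ℕ}
  (Xa Da : Fin n → Ωn → ℕ)
  (hXm : ∀ i, Measurable (Xa i)) (hDm : ∀ i, Measurable (Da i))
  (hlaw : ∀ i, Measure.map (Xa i) Pn = ξ.toMeasure)
  (hind : iIndepFun (fun i ω => (Xa i ω, Da i ω)) Pn)
  (hcb : ∀ i, CondBinomHalf Pn (Xa i) (Da i))

include hXm hDm hlaw hcb in
lemma sum_mean (f : ℕ × ℕ → ℕ) (C : ℕ) (hfC : ∀ z, f z ≤ C) :
    ∫ ω, (∑ i, (f (Xa i ω, Da i ω) : ℝ)) ∂Pn = n * (ev ξ f).toReal := by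
  have hmeas : ∀ i : Fin n, Measurable fun ω => (f (Xa i ω, Da i ω) : ℝ) := fun i =>
    (measurable_of_countable (fun z => (f z : ℝ))).comp ((hXm i).prodMk (hDm i))
  have hint : ∀ i : Fin n, Integrable (fun ω => (f (Xa i ω, Da i ω) : ℝ)) Pn := fun i =>
    (memLp_of_bounded (a := 0) (b := C)
      (Filter.Eventually.of_forall fun ω =>
        ⟨by positivity, by exact_mod_cast Nat.cast_le.mpr (hfC _)⟩)
      (hmeas i).aestronglyMeasurable 1).integrable le_rfl
  rw [integral_finset_sum Finset.univ fun i _ => hint i]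
  rw [Finset.sum_congr rfl fun (i : Fin n) _ =>
    integral_eval Pn ξ (Xa i) (Da i) (hXm i) (hDm i) (hlaw i) (hcb i) f]
  simp [mul_comm]

include hXm hDm hlaw hind hcb in
lemma cheby (f : ℕ × ℕ → ℕ) (C : ℕ) (hfC : ∀ z, f z ≤ C) {δ : ℝ} (hδ : 0 < δ) (hn : 0 < n) :
    Pn {ω | δ * n ≤ |(∑ i, (f (Xa i ω, Da i ω) : ℝ)) - n * (ev ξ f).toReal|}
      ≤ ENNReal.ofReal ((C : ℝ) ^ 2 * n / (δ * n) ^ 2) := by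
  set G : Fin n → Ωn → ℝ := fun i ω => (f (Xa i ω, Da i ω) : ℝ) with hG
  have hGmeas : ∀ i, Measurable (G i) := fun i =>
    (measurable_of_countable (fun z => (f z : ℝ))).comp ((hXm i).prodMk (hDm i))
  have hbdd : ∀ i, ∀ᵐ ω ∂Pn, G i ω ∈ Set.Icc (0:ℝ) C := fun i =>
    Filter.Eventually.of_forall fun ω => ⟨by positivity, Nat.cast_le.mpr (hfC _)⟩
  have hmem : ∀ i, MemLp (G i) 2 Pn := fun i =>
    memLp_of_bounded (hbdd i) (hGmeas i).aestronglyMeasurable 2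
  have hsum_mem : MemLp (∑ i, G i) 2 Pn := memLp_finset_sum' _ fun i _ => hmem i
  have hmean : Pn[∑ i, G i] = n * (ev ξ f).toReal := by
    rw [show Pn[∑ i, G i] = ∫ ω, (∑ i, G i ω) ∂Pn from integral_congr_ae
      (Filter.Eventually.of_forall fun ω => by simp)]
    exact sum_mean Pn ξ Xa Da hXm hDm hlaw hcb f C hfC
  have hpairwise : Set.Pairwise ↑(Finset.univ : Finset (Fin n))
      fun i j => IndepFun (G i) (G j) Pn := by
    intro i _ j _ hij
    exact (hind.comp (fun _ z => ((f z : ℕ) : ℝ)) fun _ => measurable_of_countable _).indepFun hij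
  have hvar : variance (∑ i, G i) Pn ≤ n * C ^ 2 := by
    rw [IndepFun.variance_sum (fun i _ => hmem i) hpairwise]
    calc ∑ i : Fin n, variance (G i) Pn ≤ ∑ _i : Fin n, ((C : ℝ) / 2) ^ 2 := by
          refine Finset.sum_le_sum fun i _ => ?_
          have := variance_le_sq_of_bounded (hbdd i) (hGmeas i).aemeasurable
          simpa using this
      _ ≤ n * C ^ 2 := by
          rw [Finset.sum_const, Finset.card_univ, Fintype.card_fin, nsmul_eq_mul]
          gcongr
          nlinarith [sq_nonneg (C:ℝ)]
  have hc : (0:ℝ) < δ * n := by positivity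
  have hcheb := meas_ge_le_variance_div_sq (μ := Pn) hsum_mem hc
  rw [hmean] at hcheb
  have hset : {ω | δ * n ≤ |(∑ i, (f (Xa i ω, Da i ω) : ℝ)) - n * (ev ξ f).toReal|}
      = {ω | δ * n ≤ |(∑ i, G i) ω - n * (ev ξ f).toReal|} := by
    ext ω; simp only [Set.mem_setOf_eq, Finset.sum_apply, hG]
  rw [hset]
  refine le_trans hcheb (ENNReal.ofReal_le_ofReal ?_)
  have h2 : (0:ℝ) ≤ (δ * n) ^ 2 := by positivity
  refine div_le_div_of_nonneg_right ?_ ?_ |>.trans_eq rfl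
  · exact hvar.trans_eq (by ring)
  · positivity

include hXm hDm hlaw hcb in
omit [IsProbabilityMeasure Pn] in
lemma markov (f : ℕ × ℕ → ℕ) {c : ℝ≥0∞} (hc : c ≠ 0) (hctop : c ≠ ⊤) :
    Pn {ω | c ≤ ∑ i, ((f (Xa i ω, Da i ω) : ℕ) : ℝ≥0∞)} ≤ (n * ev ξ f) / c := by
  have hmeas : Measurable fun ω => ∑ i, ((f (Xa i ω, Da i ω) : ℕ) : ℝ≥0∞) :=
    Finset.measurable_sum _ fun i _ =>
      (measurable_of_countable (fun z => ((f z : ℕ) : ℝ≥0∞))).comp ((hXm i).prodMk (hDm i))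
  refine le_trans (meas_ge_le_lintegral_div hmeas.aemeasurable hc hctop) ?_
  refine ENNReal.div_le_div ?_ le_rfl
  rw [lintegral_finset_sum Finset.univ
    (f := fun (i : Fin n) ω => ((f (Xa i ω, Da i ω) : ℕ) : ℝ≥0∞))
    (fun i _ => by
      exact (measurable_of_countable (fun z => ((f z : ℕ) : ℝ≥0∞))).comp
        ((hXm i).prodMk (hDm i)))]
  rw [Finset.sum_congr rfl fun (i : Fin n) _ =>
    lint_eval Pn ξ (Xa i) (Da i) (hXm i) (hDm i) (hlaw i) (hcb i) (fun z => ((f z : ℕ) : ℝ≥0∞))]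
  simp [ev, mul_comm]

end Cheby

/-- **`2 T_n > (1 + ε) S_n` w.h.p.**  Let `ξ ∈ P(α)` with `α = 2`, or `α > 2`
and `E[ξ²] > 3 E[ξ]`.  For each `n` let `X n 1, …, X n n` be i.i.d. copies of
`ξ`, let `D n i` be conditionally `Binomial(X n i, 1/2)` given `X n i` (the
positive-literal degrees), with the pairs `(X n i, D n i)` independent in `i`,
and set `S_n = ∑ X n i` and `T_n = ∑ (D n i) (X n i − D n i)`.  Then there is
a constant `ε > 0` with `Pr[2 T_n > (1 + ε) S_n] → 1` as `n → ∞`. -/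
theorem twoTn_gt_Sn (α : ℝ) (ξ : PMF ℕ) (hξ : IsPowerLaw ξ α)
    (hcase : α = 2 ∨ (2 < α ∧ 3 * moment ξ 1 < moment ξ 2))
    (Ω : ℕ → Type*) [∀ n, MeasurableSpace (Ω n)]
    (P : ∀ n, Measure (Ω n)) [∀ n, IsProbabilityMeasure (P n)]
    (X D : ∀ n, Fin n → Ω n → ℕ)
    (hXmeas : ∀ n i, Measurable (X n i)) (hDmeas : ∀ n i, Measurable (D n i))
    (hlaw : ∀ n i, Measure.map (X n i) (P n) = ξ.toMeasure)
    (hindep : ∀ n, iIndepFun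
      (fun i ω => (X n i ω, D n i ω)) (P n))
    (hcb : ∀ n i, CondBinomHalf (P n) (X n i) (D n i)) :
    ∃ ε : ℝ, 0 < ε ∧
      Tendsto (fun n => P n {ω |
          (1 + ε) * (∑ i, (X n i ω : ℝ)) <
            2 * ∑ i, (D n i ω : ℝ) * ((X n i ω - D n i ω : ℕ) : ℝ)})
        atTop (nhds 1) := by
  classical
  -- basic facts about the moments
  have hα2 : 2 ≤ α := by rcases hcase with h | h; exacts [h.ge, h.1.le]
  have hμtop : moment ξ 1 ≠ ⊤ := (moment_one_lt_top hα2 hξ).ne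
  have hξ0 : ξ 0 = 0 := hξ.2.1
  have hμ1 : 1 ≤ moment ξ 1 := moment_one_ge ξ hξ0
  have hkey : moment ξ 1 < 2 * ev ξ (fun z => z.2 * (z.1 - z.2)) := by
    rcases hcase with hα | ⟨hα, hmm⟩
    · have h2top : moment ξ 2 = ⊤ := moment_two_top (by rwa [hα] at hξ)
      have hqtop : ∑' ℓ : ℕ, ((ℓ * (ℓ - 1) : ℕ) : ℝ≥0∞) * ξ ℓ = ⊤ := by
        rw [moment_two_split] at h2top
        rcases ENNReal.add_eq_top.mp h2top with h | h
        · exact h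
        · exact absurd h hμtop
      have hev : ev ξ (fun z => z.2 * (z.1 - z.2)) = ⊤ := by
        by_contra h
        have h4 : (4 : ℝ≥0∞) * ev ξ (fun z => z.2 * (z.1 - z.2)) ≠ ⊤ :=
          ENNReal.mul_ne_top (by norm_num) h
        rw [ev_Y] at h4
        exact h4 hqtop
      rw [hev, ENNReal.mul_top (by norm_num)]
      exact hμtop.lt_top
    · rw [moment_two_split] at hmm
      rw [show (3:ℝ≥0∞) * moment ξ 1 = 2 * moment ξ 1 + moment ξ 1 from by ring] at hmm
      have h2q : 2 * moment ξ 1 < ∑' ℓ : ℕ, ((ℓ * (ℓ - 1) : ℕ) : ℝ≥0∞) * ξ ℓ :=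
        (ENNReal.add_lt_add_iff_right hμtop).mp hmm
      rw [← ev_Y, show (4:ℝ≥0∞) = 2 * 2 from by norm_num, mul_assoc] at h2q
      exact (ENNReal.mul_lt_mul_iff_right (by norm_num) (by norm_num)).mp h2q
  -- choose the truncation level M
  obtain ⟨M, hM⟩ : ∃ M : ℕ, moment ξ 1 < 2 * ev ξ (fun z => min (z.2 * (z.1 - z.2)) M) := by
    rw [← ev_sup_min ξ (fun z => z.2 * (z.1 - z.2)), ENNReal.mul_iSup] at hkey
    exact lt_iSup_iff.mp hkey
  have hevG_ne_top : ev ξ (fun z => min (z.2 * (z.1 - z.2)) M) ≠ ⊤ :=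
    ((ev_le_const ξ _ M fun z => min_le_right _ _).trans_lt (ENNReal.natCast_lt_top M)).ne
  set μR : ℝ := (moment ξ 1).toReal with hμR
  set mR : ℝ := (ev ξ (fun z => min (z.2 * (z.1 - z.2)) M)).toReal with hmR
  have hμR1 : 1 ≤ μR := by
    have := ENNReal.toReal_mono hμtop hμ1
    simpa using this
  have h2m : μR < 2 * mR := by
    have := ENNReal.toReal_strict_mono (ENNReal.mul_ne_top (by norm_num) hevG_ne_top) hM
    rw [ENNReal.toReal_mul] at this
    simpa using this
  -- choose the constants ε and δ
  set ε : ℝ := (2 * mR - μR) / (2 * μR) with hε_def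
  have hεpos : 0 < ε := by apply div_pos <;> linarith
  set δ : ℝ := (2 * mR - μR) / (8 + 4 * ε) with hδ_def
  have hδpos : 0 < δ := by apply div_pos <;> linarith
  have hkeyineq : (1 + ε) * (μR + 2 * δ) ≤ 2 * (mR - δ) := by
    have hε_eq : ε * (2 * μR) = 2 * mR - μR := div_mul_cancel₀ _ (by linarith)
    have hδ_eq : δ * (8 + 4 * ε) = 2 * mR - μR := div_mul_cancel₀ _ (by linarith)
    nlinarith [hδ_eq, hε_eq]
  refine ⟨ε, hεpos, ?_⟩
  set A : (n : ℕ) → Set (Ω n) := fun n => {ω |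
      (1 + ε) * (∑ i, (X n i ω : ℝ)) <
        2 * ∑ i, (D n i ω : ℝ) * ((X n i ω - D n i ω : ℕ) : ℝ)} with hA
  have hAmeas : ∀ n, MeasurableSet (A n) := fun n => by
    apply measurableSet_lt
    · exact (Finset.measurable_sum Finset.univ fun i _ =>
        (measurable_of_countable (fun k : ℕ => (k : ℝ))).comp (hXmeas n i)).const_mul _
    · exact (Finset.measurable_sum Finset.univ fun i _ =>
        (measurable_of_countable (fun z : ℕ × ℕ => (z.2 : ℝ) * ((z.1 - z.2 : ℕ) : ℝ))).comp
          ((hXmeas n i).prodMk (hDmeas n i))).const_mul _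
  have hcompl : Tendsto (fun n => P n ((A n)ᶜ)) atTop (nhds 0) := by
    rw [ENNReal.tendsto_atTop_zero]
    intro η hη
    by_cases hη1 : 1 ≤ η
    · exact ⟨0, fun n _ => le_trans prob_le_one hη1⟩
    push_neg at hη1
    have hηtop : η ≠ ⊤ := (hη1.trans ENNReal.one_lt_top).ne
    have hη0 : η ≠ 0 := hη.ne'
    have hη2 : η / 2 ≠ 0 := by simp [ENNReal.div_eq_zero_iff, hη0]
    have hofδ : ENNReal.ofReal δ ≠ 0 := (ENNReal.ofReal_pos.mpr hδpos).ne'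
    set β := η / 2 * ENNReal.ofReal δ with hβ
    have hβ0 : β ≠ 0 := by
      simp only [hβ, ne_eq, mul_eq_zero, not_or]
      exact ⟨hη2, hofδ⟩
    have hβtop : β ≠ ⊤ := ENNReal.mul_ne_top
      (by simp [ENNReal.div_eq_top, hηtop]) ENNReal.ofReal_ne_top
    -- choose the truncation level K for the first coordinate
    have hsplit : ∀ K : ℕ, ev ξ (fun z => min z.1 K) + ev ξ (fun z => z.1 - min z.1 K)
        = moment ξ 1 := by
      intro K
      rw [← ev_add, ← moment_one_eq_ev]
      congr 1
      funext z
      exact Nat.add_sub_cancel' (min_le_left _ _)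
    obtain ⟨K, hK⟩ : ∃ K : ℕ, ev ξ (fun z => z.1 - min z.1 K) ≤ β := by
      by_cases hcase2 : moment ξ 1 ≤ β
      · refine ⟨0, le_trans ?_ hcase2⟩
        rw [← hsplit 0]
        exact le_add_self
      · push_neg at hcase2
        have hsub_lt : moment ξ 1 - β < moment ξ 1 :=
          ENNReal.sub_lt_self hμtop (zero_lt_one.trans_le hμ1).ne' hβ0
        have hlt : moment ξ 1 - β < ⨆ K : ℕ, ev ξ (fun z => min z.1 K) := by
          rw [ev_sup_min ξ (fun z => z.1), moment_one_eq_ev]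
          exact hsub_lt
        obtain ⟨K, hK2⟩ := lt_iSup_iff.mp hlt
        refine ⟨K, ?_⟩
        have hsK_ne : ev ξ (fun z => min z.1 K) ≠ ⊤ := by
          refine ne_top_of_le_ne_top hμtop ?_
          rw [← hsplit K]
          exact le_self_add
        have hrK : ev ξ (fun z => z.1 - min z.1 K)
            = moment ξ 1 - ev ξ (fun z => min z.1 K) :=
          ENNReal.eq_sub_of_add_eq hsK_ne (by rw [add_comm]; exact hsplit K)
        rw [hrK, tsub_le_iff_right, add_comm]
        exact le_of_lt ((ENNReal.sub_lt_iff_lt_right hβtop hcase2.le).mp hK2)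
    -- choose the cutoff N for n
    have ht : 0 < (η / 4).toReal := ENNReal.toReal_pos
      (by simp [ENNReal.div_eq_zero_iff, hη0]) (by simp [ENNReal.div_eq_top, hηtop])
    set t : ℝ := (η / 4).toReal with htdef
    obtain ⟨N₁, hN₁⟩ := exists_nat_ge ((M : ℝ) ^ 2 / (δ ^ 2 * t))
    obtain ⟨N₂, hN₂⟩ := exists_nat_ge ((K : ℝ) ^ 2 / (δ ^ 2 * t))
    refine ⟨max N₁ N₂ + 1, fun n hn => ?_⟩
    have hn0 : 0 < n := by omega
    have hnR : (0 : ℝ) < n := by exact_mod_cast hn0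
    have hcb_bound : ∀ C : ℕ, (C : ℝ) ^ 2 / (δ ^ 2 * t) ≤ n →
        ENNReal.ofReal ((C : ℝ) ^ 2 * n / (δ * n) ^ 2) ≤ η / 4 := by
      intro C hC
      have heq : (C : ℝ) ^ 2 * n / (δ * n) ^ 2 = (C : ℝ) ^ 2 / (δ ^ 2 * n) := by
        field_simp
      have hle : (C : ℝ) ^ 2 / (δ ^ 2 * n) ≤ t := by
        rw [div_le_iff₀ (by positivity)]
        have h' := (div_le_iff₀ (by positivity : (0:ℝ) < δ ^ 2 * t)).mp hC
        nlinarith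
      calc ENNReal.ofReal ((C : ℝ) ^ 2 * n / (δ * n) ^ 2)
          = ENNReal.ofReal ((C : ℝ) ^ 2 / (δ ^ 2 * n)) := by rw [heq]
        _ ≤ ENNReal.ofReal t := ENNReal.ofReal_le_ofReal hle
        _ = η / 4 := ENNReal.ofReal_toReal (by simp [ENNReal.div_eq_top, hηtop])
    -- the three bad events
    have hB1 := cheby (P n) ξ (X n) (D n) (hXmeas n) (hDmeas n) (hlaw n) (hindep n) (hcb n)
      (fun z => min (z.2 * (z.1 - z.2)) M) M (fun z => min_le_right _ _) hδpos hn0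
    have hB2 := cheby (P n) ξ (X n) (D n) (hXmeas n) (hDmeas n) (hlaw n) (hindep n) (hcb n)
      (fun z => min z.1 K) K (fun z => min_le_right _ _) hδpos hn0
    have hB3' := markov (P n) ξ (X n) (D n) (hXmeas n) (hDmeas n) (hlaw n) (hcb n)
      (fun z => z.1 - min z.1 K) (c := ENNReal.ofReal (δ * n))
      (ENNReal.ofReal_pos.mpr (by positivity)).ne' ENNReal.ofReal_ne_top
    set μK : ℝ := (ev ξ (fun z => min z.1 K)).toReal with hμKdef
    have h₁n : ((M : ℝ) ^ 2 / (δ ^ 2 * t)) ≤ n := by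
      refine le_trans hN₁ ?_
      exact_mod_cast (by omega : N₁ ≤ n)
    have h₂n : ((K : ℝ) ^ 2 / (δ ^ 2 * t)) ≤ n := by
      refine le_trans hN₂ ?_
      exact_mod_cast (by omega : N₂ ≤ n)
    -- inclusion of the complement in the union of the three bad events
    have hsub : (A n)ᶜ ⊆
        {ω | δ * n ≤ |(∑ i, ((min (D n i ω * (X n i ω - D n i ω)) M : ℕ) : ℝ)) - n * mR|} ∪
        ({ω | δ * n ≤ |(∑ i, ((min (X n i ω) K : ℕ) : ℝ)) - n * μK|} ∪
         {ω | ENNReal.ofReal (δ * n)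
            ≤ ∑ i, ((X n i ω - min (X n i ω) K : ℕ) : ℝ≥0∞)}) := by
      intro ω hω
      by_contra hB
      rw [Set.mem_union, Set.mem_union] at hB
      push_neg at hB
      obtain ⟨h1, h2, h3⟩ := hB
      simp only [Set.mem_setOf_eq, not_le] at h1 h2 h3
      simp only [hA, Set.mem_compl_iff, Set.mem_setOf_eq, not_lt] at hω
      obtain ⟨h1l, h1r⟩ := abs_lt.mp h1
      obtain ⟨h2l, h2r⟩ := abs_lt.mp h2
      have hSRlt : (∑ i, ((X n i ω - min (X n i ω) K : ℕ) : ℝ)) < δ * n := by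
        have hcast : ENNReal.ofReal (∑ i, ((X n i ω - min (X n i ω) K : ℕ) : ℝ))
            = ∑ i, ((X n i ω - min (X n i ω) K : ℕ) : ℝ≥0∞) := by
          rw [ENNReal.ofReal_sum_of_nonneg (fun i _ => by positivity)]
          exact Finset.sum_congr rfl fun i _ => ENNReal.ofReal_natCast _
        have h3' := hcast ▸ h3
        exact (ENNReal.ofReal_lt_ofReal_iff (by positivity)).mp h3'
      have hXsplit : (∑ i, (X n i ω : ℝ))
          = (∑ i, ((min (X n i ω) K : ℕ) : ℝ))
            + ∑ i, ((X n i ω - min (X n i ω) K : ℕ) : ℝ) := by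
        rw [← Finset.sum_add_distrib]
        refine Finset.sum_congr rfl fun i _ => ?_
        rw [← Nat.cast_add]
        congr 1
        exact (Nat.add_sub_cancel' (min_le_left _ _)).symm
      have hGY : (∑ i, ((min (D n i ω * (X n i ω - D n i ω)) M : ℕ) : ℝ))
          ≤ ∑ i, (D n i ω : ℝ) * ((X n i ω - D n i ω : ℕ) : ℝ) := by
        refine Finset.sum_le_sum fun i _ => ?_
        rw [← Nat.cast_mul]
        exact_mod_cast min_le_left _ _
      have hμKle : μK ≤ μR := by
        rw [hμKdef, hμR]
        refine ENNReal.toReal_mono hμtop ?_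
        rw [← moment_one_eq_ev]
        exact ev_mono ξ fun z => min_le_left _ _
      have hkn : (n : ℝ) * ((1 + ε) * (μR + 2 * δ)) ≤ n * (2 * (mR - δ)) :=
        mul_le_mul_of_nonneg_left hkeyineq hnR.le
      have e1 : (1 + ε) * (∑ i, (X n i ω : ℝ))
          < (1 + ε) * (n * μK + δ * n + δ * n) := by
        refine mul_lt_mul_of_pos_left ?_ (by linarith)
        rw [hXsplit]
        linarith
      have e2 : (1 + ε) * ((n : ℝ) * μK + δ * n + δ * n)
          ≤ (1 + ε) * (n * μR + 2 * (δ * n)) := by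
        refine mul_le_mul_of_nonneg_left ?_ (by linarith)
        have := mul_le_mul_of_nonneg_left hμKle hnR.le
        linarith
      have e3 : (1 + ε) * ((n : ℝ) * μR + 2 * (δ * n)) = n * ((1 + ε) * (μR + 2 * δ)) := by
        ring
      have e4 : (n : ℝ) * (2 * (mR - δ)) = 2 * (n * mR) - 2 * (δ * n) := by ring
      linarith [e1, e2, e3, e4, hkn, hGY, h1l, hω]
    -- put the three bounds together
    refine le_trans (measure_mono hsub) (le_trans (measure_union_le _ _) ?_)
    have hbound1 : P n {ω | δ * n ≤
        |(∑ i, ((min (D n i ω * (X n i ω - D n i ω)) M : ℕ) : ℝ)) - n * mR|} ≤ η / 4 :=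
      le_trans hB1 (hcb_bound M h₁n)
    have hbound2 : P n {ω | δ * n ≤
        |(∑ i, ((min (X n i ω) K : ℕ) : ℝ)) - n * μK|} ≤ η / 4 :=
      le_trans hB2 (hcb_bound K h₂n)
    have hbound3 : P n {ω | ENNReal.ofReal (δ * n)
        ≤ ∑ i, ((X n i ω - min (X n i ω) K : ℕ) : ℝ≥0∞)} ≤ η / 2 := by
      refine le_trans hB3' ?_
      have hδn : ENNReal.ofReal (δ * n) = (n : ℝ≥0∞) * ENNReal.ofReal δ := by
        rw [ENNReal.ofReal_mul hδpos.le, ENNReal.ofReal_natCast, mul_comm]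
      rw [hδn, ENNReal.mul_div_mul_left _ _
        (by exact_mod_cast hn0.ne' : (n : ℝ≥0∞) ≠ 0) (ENNReal.natCast_ne_top n)]
      calc ev ξ (fun z => z.1 - min z.1 K) / ENNReal.ofReal δ
          ≤ β / ENNReal.ofReal δ := ENNReal.div_le_div hK le_rfl
        _ = η / 2 * (ENNReal.ofReal δ / ENNReal.ofReal δ) := by rw [hβ, mul_div_assoc]
        _ = η / 2 := by rw [ENNReal.div_self hofδ ENNReal.ofReal_ne_top, mul_one]
    refine le_trans (add_le_add hbound1
      (le_trans (measure_union_le _ _) (add_le_add hbound2 hbound3))) ?_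
    refine le_of_eq ?_
    rw [← add_assoc, ENNReal.div_add_div_same, ← two_mul,
      show (4 : ℝ≥0∞) = 2 * 2 from by norm_num,
      ENNReal.mul_div_mul_left η 2 (by norm_num) (by norm_num),
      ENNReal.add_halves]
  -- conclude
  have hfun : ∀ n, P n (A n) = 1 - P n ((A n)ᶜ) := fun n => by
    rw [prob_compl_eq_one_sub (hAmeas n),
      ENNReal.sub_sub_cancel ENNReal.one_ne_top prob_le_one]
  change Tendsto (fun n => P n (A n)) atTop (nhds 1)
  simp only [hfun]
  have hcont := (ENNReal.continuous_sub_left ENNReal.one_ne_top).tendsto 0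
  have hfinal := hcont.comp hcompl
  simpa [Function.comp_def] using hfinal


end RandomSat
end

section
/- Let c > 0, V > 0, α > 1 and 0 < β < 1 be constants, and let ξ₁, …, ξ_{⌈cn⌉} be independent positive integer-valued random variables, each satisfying Pr[ξ_i ≥ ℓ] ≤ V·ℓ^{−α} for all integers ℓ ≥ 1. Then there exists a constant C > 0 such that, with probability tending to 1 as n → ∞, every subset A ⊆ {1, …, ⌈cn⌉} of size ⌈n^β⌉ satisfies Σ_{i∈A} ξ_i ≤ C·n^{β + (1−β)/α}. -/
open MeasureTheory ProbabilityTheory Filter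
open scoped ENNReal NNReal

namespace RandomSat
set_option maxHeartbeats 1000000


lemma slope_ge {p : ℝ} (hp0 : 0 < p) (hp1 : p ≤ 1) {x : ℝ} (hx : 1 ≤ x) :
    p * x ^ (p - 1) ≤ x ^ p - (x - 1) ^ p := by
  have hx0 : (0:ℝ) < x := lt_of_lt_of_le one_pos hx
  have hcont : ContinuousOn (fun t : ℝ => t ^ p) (Set.Icc (x-1) x) := by
    intro t ht
    exact (Real.continuousAt_rpow_const t p (Or.inr hp0.le)).continuousWithinAt
  have hderiv : ∀ t ∈ Set.Ioo (x-1) x, HasDerivAt (fun t : ℝ => t ^ p) (p * t ^ (p-1)) t := by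
    intro t ht
    have ht0 : t ≠ 0 := by
      have : (0:ℝ) ≤ x - 1 := by linarith
      exact ne_of_gt (lt_of_le_of_lt this ht.1)
    simpa [mul_comm] using Real.hasDerivAt_rpow_const (p := p) (Or.inl ht0)
  obtain ⟨t, ht, hslope⟩ := exists_hasDerivAt_eq_slope (fun t : ℝ => t ^ p)
    (fun t => p * t ^ (p-1)) (by linarith) hcont hderiv
  have ht0 : 0 < t := lt_of_le_of_lt (by linarith : (0:ℝ) ≤ x - 1) ht.1
  have : x ^ (p-1) ≤ t ^ (p-1) := Real.rpow_le_rpow_of_nonpos ht0 ht.2.le (by linarith)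
  have h2 : p * x ^ (p-1) ≤ p * t ^ (p-1) := by nlinarith
  calc p * x ^ (p-1) ≤ p * t ^ (p-1) := h2
    _ = (x ^ p - (x-1) ^ p) / (x - (x-1)) := hslope
    _ = x ^ p - (x-1) ^ p := by norm_num

lemma slope_le {p : ℝ} (hp : p < 0) {x : ℝ} (hx : 2 ≤ x) :
    (-p) * x ^ (p - 1) ≤ (x - 1) ^ p - x ^ p := by
  have hx1 : (1:ℝ) ≤ x - 1 := by linarith
  have hcont : ContinuousOn (fun t : ℝ => t ^ p) (Set.Icc (x-1) x) := by
    intro t ht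
    have : t ≠ 0 := by have := ht.1; intro h; rw [h] at this; linarith
    exact (Real.continuousAt_rpow_const t p (Or.inl this)).continuousWithinAt
  have hderiv : ∀ t ∈ Set.Ioo (x-1) x, HasDerivAt (fun t : ℝ => t ^ p) (p * t ^ (p-1)) t := by
    intro t ht
    have ht0 : t ≠ 0 := by have := ht.1; intro h; rw [h] at this; linarith
    simpa [mul_comm] using Real.hasDerivAt_rpow_const (p := p) (Or.inl ht0)
  obtain ⟨t, ht, hslope⟩ := exists_hasDerivAt_eq_slope (fun t : ℝ => t ^ p)
    (fun t => p * t ^ (p-1)) (by linarith) hcont hderiv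
  have ht0 : 0 < t := lt_of_lt_of_le (by linarith) (le_of_lt ht.1)
  have hbase : x ^ (p-1) ≤ t ^ (p-1) := Real.rpow_le_rpow_of_nonpos ht0 ht.2.le (by linarith)
  have h2 : (-p) * x ^ (p-1) ≤ (-p) * t ^ (p-1) := by nlinarith
  have h3 : p * t ^ (p-1) = x ^ p - (x-1) ^ p := by
    have := hslope
    field_simp at this ⊢
    linarith [this]
  linarith [h2, h3.symm.le]


lemma sum_rpow_le {s : ℝ} (hs0 : 0 < s) (hs1 : s < 1) (L : ℕ) :
    ∑ ℓ ∈ Finset.Icc 1 L, (ℓ:ℝ) ^ (-s) ≤ (L:ℝ) ^ (1-s) / (1-s) := by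
  induction L with
  | zero => simp [Real.zero_rpow (by linarith : (1:ℝ) - s ≠ 0)]
  | succ L ih =>
    rw [← Finset.insert_Icc_right_eq_Icc_add_one (by omega), Finset.sum_insert (by simp)]
    have hx : (1:ℝ) ≤ (L:ℝ) + 1 := by have : (0:ℝ) ≤ (L:ℝ) := Nat.cast_nonneg L; linarith
    have := slope_ge (p := 1 - s) (by linarith) (by linarith) hx
    have hs : (0:ℝ) < 1 - s := by linarith
    have hcast : ((L:ℝ) + 1) - 1 = (L:ℝ) := by ring
    rw [hcast] at this
    have h1 : ((L+1:ℕ):ℝ) = (L:ℝ) + 1 := by push_cast; ring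
    rw [h1]
    have h2 : ((L:ℝ)+1) ^ (1-s-1) = ((L:ℝ)+1) ^ (-s) := by norm_num
    rw [h2] at this
    have : ((L:ℝ)+1) ^ (-s) ≤ (((L:ℝ)+1) ^ (1-s) - (L:ℝ) ^ (1-s)) / (1-s) := by
      rw [le_div_iff₀ hs]; linarith
    have hdiv : (L:ℝ) ^ (1-s) / (1-s) + (((L:ℝ)+1) ^ (1-s) - (L:ℝ) ^ (1-s)) / (1-s)
        = ((L:ℝ)+1) ^ (1-s) / (1-s) := by ring
    linarith [ih]

lemma sum_rpow_tail_le {q : ℝ} (hq : 1 < q) (a : ℕ) (ha : 1 ≤ a) (L : ℕ) :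
    ∑ ℓ ∈ Finset.Ioc a L, (ℓ:ℝ) ^ (-q) ≤ (a:ℝ) ^ (1-q) / (q-1) := by
  have key : ∀ L : ℕ, ∑ ℓ ∈ Finset.Ioc a L, (ℓ:ℝ) ^ (-q)
      ≤ (a:ℝ) ^ (1-q) / (q-1) - ((max a L : ℕ):ℝ) ^ (1-q) / (q-1) := by
    intro L
    induction L with
    | zero => simp [Nat.max_eq_left (Nat.zero_le a)]
    | succ L ih =>
      rcases le_or_gt (L+1) a with h | h
      · rw [Finset.Ioc_eq_empty (by omega)]
        rw [Nat.max_eq_left (by omega)]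
        simp
      · have haL : a ≤ L := by omega
        rw [← Finset.Icc_add_one_left_eq_Ioc, ← Finset.insert_Icc_right_eq_Icc_add_one (by omega),
          Finset.sum_insert (by simp), Finset.Icc_add_one_left_eq_Ioc]
        rw [Nat.max_eq_right (by omega)] at ih ⊢
        have hx : (2:ℝ) ≤ (L:ℝ) + 1 := by
          have : (1:ℝ) ≤ (L:ℝ) := by exact_mod_cast Nat.one_le_iff_ne_zero.mpr (by omega)
          linarith
        have := slope_le (p := 1 - q) (by linarith) hx
        have hcast : ((L:ℝ) + 1) - 1 = (L:ℝ) := by ring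
        rw [hcast] at this
        have h2 : ((L:ℝ)+1) ^ (1-q-1) = ((L:ℝ)+1) ^ (-q) := by norm_num
        rw [h2] at this
        have hqq : (0:ℝ) < q - 1 := by linarith
        have h3 : ((L:ℝ)+1) ^ (-q) ≤ ((L:ℝ) ^ (1-q) - ((L:ℝ)+1) ^ (1-q)) / (q-1) := by
          rw [le_div_iff₀ hqq]; nlinarith
        have h1 : ((L+1:ℕ):ℝ) = (L:ℝ) + 1 := by push_cast; ring
        rw [h1]
        have : ((L:ℝ) ^ (1-q) - ((L:ℝ)+1) ^ (1-q)) / (q-1)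
            = (L:ℝ) ^ (1-q)/(q-1) - ((L:ℝ)+1) ^ (1-q)/(q-1) := by ring
        linarith
  refine (key L).trans ?_
  have : (0:ℝ) ≤ ((max a L : ℕ):ℝ) ^ (1-q) / (q-1) := div_nonneg (Real.rpow_nonneg (Nat.cast_nonneg _) _) (by linarith)
  linarith

lemma rpow_between {a x t : ℝ} (ha : 1 ≤ a) (h1 : a ≤ x) (h2 : x ≤ 2*a) (ht : t ≤ 1) :
    x ^ t ≤ 2 * a ^ t := by
  have ha0 : (0:ℝ) < a := by linarith
  rcases le_or_gt 0 t with h | h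
  · calc x ^ t ≤ (2*a) ^ t := Real.rpow_le_rpow (by linarith) h2 h
      _ = 2 ^ t * a ^ t := Real.mul_rpow (by norm_num) ha0.le
      _ ≤ 2 * a ^ t := by
          have h2t : (2:ℝ) ^ t ≤ 2 ^ (1:ℝ) := Real.rpow_le_rpow_of_exponent_le (by norm_num) ht
          rw [Real.rpow_one] at h2t
          have : (0:ℝ) ≤ a ^ t := (Real.rpow_pos_of_pos ha0 t).le
          nlinarith
  · have : x ^ t ≤ a ^ t := Real.rpow_le_rpow_of_nonpos ha0 h1 h.le
    have h0 : (0:ℝ) ≤ a ^ t := (Real.rpow_pos_of_pos ha0 t).le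
    linarith


lemma cast_eq_sum_ind (L k : ℕ) (hk : k ≤ L) :
    (k:ℝ) = ∑ ℓ ∈ Finset.Icc 1 L, (if ℓ ≤ k then (1:ℝ) else 0) := by
  rw [Finset.sum_boole]
  congr 1
  have : (Finset.Icc 1 L).filter (fun ℓ => ℓ ≤ k) = Finset.Icc 1 k := by
    ext ℓ; simp only [Finset.mem_filter, Finset.mem_Icc]; omega
  rw [this, Nat.card_Icc]
  omega

lemma gauss_odd (k : ℕ) : ∑ ℓ ∈ Finset.Icc 1 k, (2*(ℓ:ℝ) - 1) = (k:ℝ)^2 := by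
  induction k with
  | zero => simp
  | succ k ih =>
    rw [← Finset.insert_Icc_right_eq_Icc_add_one (by omega), Finset.sum_insert (by simp), ih]
    push_cast; ring

lemma sq_cast_eq_sum_ind (L k : ℕ) (hk : k ≤ L) :
    ((k:ℝ))^2 = ∑ ℓ ∈ Finset.Icc 1 L, (2*(ℓ:ℝ) - 1) * (if ℓ ≤ k then (1:ℝ) else 0) := by
  have : ∀ ℓ : ℕ, (2*(ℓ:ℝ) - 1) * (if ℓ ≤ k then (1:ℝ) else 0)
      = (if ℓ ≤ k then (2*(ℓ:ℝ) - 1) else 0) := by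
    intro ℓ; split <;> ring
  simp_rw [this]
  rw [← Finset.sum_filter]
  have hf : (Finset.Icc 1 L).filter (fun ℓ => ℓ ≤ k) = Finset.Icc 1 k := by
    ext ℓ; simp only [Finset.mem_filter, Finset.mem_Icc]; omega
  rw [hf, gauss_odd]

lemma integral_cast_eq (Ω : Type*) [MeasurableSpace Ω] (μ : Measure Ω) [IsProbabilityMeasure μ]
    (g : Ω → ℕ) (hg : Measurable g) (L : ℕ) (hgL : ∀ ω, g ω ≤ L) :
    ∫ ω, (g ω : ℝ) ∂μ = ∑ ℓ ∈ Finset.Icc 1 L, (μ {ω | ℓ ≤ g ω}).toReal := by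
  have hset : ∀ ℓ : ℕ, MeasurableSet {ω | ℓ ≤ g ω} :=
    fun ℓ => hg (measurableSet_le measurable_const measurable_id)
  have heq : (fun ω => (g ω : ℝ))
      = fun ω => ∑ ℓ ∈ Finset.Icc 1 L, Set.indicator {ω | ℓ ≤ g ω} (fun _ => (1:ℝ)) ω := by
    funext ω
    rw [cast_eq_sum_ind L (g ω) (hgL ω)]
    refine Finset.sum_congr rfl fun ℓ _ => ?_
    by_cases h : ℓ ≤ g ω <;> simp [Set.indicator, h]
  rw [heq, integral_finset_sum]
  · refine Finset.sum_congr rfl fun ℓ _ => ?_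
    rw [integral_indicator_const (1:ℝ) (hset ℓ)]
    simp
    rfl
  · intro ℓ _
    exact (integrable_const (1:ℝ)).indicator (hset ℓ)

lemma integral_sq_cast_eq (Ω : Type*) [MeasurableSpace Ω] (μ : Measure Ω) [IsProbabilityMeasure μ]
    (g : Ω → ℕ) (hg : Measurable g) (L : ℕ) (hgL : ∀ ω, g ω ≤ L) :
    ∫ ω, ((g ω : ℝ))^2 ∂μ
      = ∑ ℓ ∈ Finset.Icc 1 L, (2*(ℓ:ℝ) - 1) * (μ {ω | ℓ ≤ g ω}).toReal := by
  have hset : ∀ ℓ : ℕ, MeasurableSet {ω | ℓ ≤ g ω} :=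
    fun ℓ => hg (measurableSet_le measurable_const measurable_id)
  have heq : (fun ω => ((g ω : ℝ))^2)
      = fun ω => ∑ ℓ ∈ Finset.Icc 1 L,
          Set.indicator {ω | ℓ ≤ g ω} (fun _ => (2*(ℓ:ℝ) - 1)) ω := by
    funext ω
    rw [sq_cast_eq_sum_ind L (g ω) (hgL ω)]
    refine Finset.sum_congr rfl fun ℓ _ => ?_
    by_cases h : ℓ ≤ g ω <;> simp [Set.indicator, h]
  rw [heq, integral_finset_sum]
  · refine Finset.sum_congr rfl fun ℓ _ => ?_
    rw [integral_indicator_const (2*(ℓ:ℝ) - 1) (hset ℓ)]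
    simp [mul_comm]
    exact Or.inl rfl
  · intro ℓ _
    exact (integrable_const _).indicator (hset ℓ)


section moments
variable {Ω : Type*} [MeasurableSpace Ω] (μ : Measure Ω) [IsProbabilityMeasure μ]
  {V α : ℝ} (hV : 0 < V) (hα : 1 < α)
  (ξi : Ω → ℕ) (l0 L : ℕ) (hl0 : 1 ≤ l0)

include hV in
lemma trunc_tail_le
    (htail : ∀ ℓ : ℕ, 1 ≤ ℓ → μ {ω | ℓ ≤ ξi ω} ≤ ENNReal.ofReal (V * (ℓ : ℝ) ^ (-α)))
    (ℓ : ℕ) (hℓ : 1 ≤ ℓ) :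
    (μ {ω | ℓ ≤ (if l0 ≤ ξi ω then min (ξi ω) L else 0)}).toReal
      ≤ V * ((max ℓ l0 : ℕ):ℝ) ^ (-α) := by
  have hsub : {ω | ℓ ≤ (if l0 ≤ ξi ω then min (ξi ω) L else 0)}
      ⊆ {ω | (max ℓ l0 : ℕ) ≤ ξi ω} := by
    intro ω hω
    simp only [Set.mem_setOf_eq] at hω ⊢
    split at hω
    · next h => exact max_le (le_trans hω (min_le_left _ _)) h
    · omega
  have h1 := (measure_mono hsub).trans (htail (max ℓ l0) (le_trans hℓ (le_max_left _ _)))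
  have h2 : (0:ℝ) ≤ V * ((max ℓ l0 : ℕ):ℝ) ^ (-α) :=
    mul_nonneg hV.le (Real.rpow_nonneg (Nat.cast_nonneg _) _)
  calc (μ _).toReal ≤ (ENNReal.ofReal (V * ((max ℓ l0 : ℕ):ℝ) ^ (-α))).toReal :=
        ENNReal.toReal_mono ENNReal.ofReal_ne_top h1
    _ = V * ((max ℓ l0 : ℕ):ℝ) ^ (-α) := ENNReal.toReal_ofReal h2

-- first moment bound
include hV hα hl0 in
lemma moment_one :
    ∑ ℓ ∈ Finset.Icc 1 L, V * ((max ℓ l0 : ℕ):ℝ) ^ (-α)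
      ≤ V * ((l0:ℝ) ^ (1-α) + (l0:ℝ) ^ (1-α) / (α-1)) := by
  have hl0R : (1:ℝ) ≤ (l0:ℝ) := by exact_mod_cast hl0
  rw [← Finset.sum_filter_add_sum_filter_not (Finset.Icc 1 L) (fun ℓ => ℓ ≤ l0)]
  have e1 : ∀ ℓ ∈ (Finset.Icc 1 L).filter (fun ℓ => ℓ ≤ l0),
      V * ((max ℓ l0 : ℕ):ℝ) ^ (-α) = V * ((l0:ℝ)) ^ (-α) := by
    intro ℓ hℓ
    simp only [Finset.mem_filter] at hℓ
    rw [Nat.max_eq_right hℓ.2]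
  have e2 : (Finset.Icc 1 L).filter (fun ℓ => ¬ ℓ ≤ l0) = Finset.Ioc l0 L := by
    ext ℓ; simp only [Finset.mem_filter, Finset.mem_Icc, Finset.mem_Ioc]; omega
  rw [Finset.sum_congr rfl e1, Finset.sum_const, e2]
  have hcard : ((Finset.Icc 1 L).filter (fun ℓ => ℓ ≤ l0)).card ≤ l0 := by
    have : (Finset.Icc 1 L).filter (fun ℓ => ℓ ≤ l0) ⊆ Finset.Icc 1 l0 := by
      intro ℓ hℓ; simp only [Finset.mem_filter, Finset.mem_Icc] at hℓ ⊢; omega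
    calc _ ≤ (Finset.Icc 1 l0).card := Finset.card_le_card this
      _ = l0 := by rw [Nat.card_Icc]; omega
  have hb1 : (((Finset.Icc 1 L).filter (fun ℓ => ℓ ≤ l0)).card : ℝ) • (V * (l0:ℝ) ^ (-α))
      ≤ V * (l0:ℝ) ^ (1-α) := by
    rw [smul_eq_mul]
    have hpos : (0:ℝ) ≤ V * (l0:ℝ) ^ (-α) :=
      mul_nonneg hV.le (Real.rpow_nonneg (Nat.cast_nonneg _) _)
    calc _ ≤ (l0:ℝ) * (V * (l0:ℝ) ^ (-α)) := by
          apply mul_le_mul_of_nonneg_right _ hpos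
          exact_mod_cast hcard
      _ = V * ((l0:ℝ) ^ (1:ℝ) * (l0:ℝ) ^ (-α)) := by rw [Real.rpow_one]; ring
      _ = V * (l0:ℝ) ^ (1-α) := by
          rw [← Real.rpow_add (by linarith : (0:ℝ) < (l0:ℝ)),
            show (1:ℝ) + -α = 1 - α from by ring]
  have hb2 : ∑ ℓ ∈ Finset.Ioc l0 L, V * ((max ℓ l0 : ℕ):ℝ) ^ (-α)
      ≤ V * ((l0:ℝ) ^ (1-α) / (α-1)) := by
    have : ∀ ℓ ∈ Finset.Ioc l0 L, V * ((max ℓ l0 : ℕ):ℝ) ^ (-α) = V * ((ℓ:ℝ)) ^ (-α) := by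
      intro ℓ hℓ
      simp only [Finset.mem_Ioc] at hℓ
      rw [Nat.max_eq_left (le_of_lt hℓ.1)]
    rw [Finset.sum_congr rfl this, ← Finset.mul_sum]
    exact mul_le_mul_of_nonneg_left
      ((sum_rpow_tail_le hα l0 hl0 L)) hV.le
  rw [nsmul_eq_mul] at *
  calc _ ≤ V * (l0:ℝ) ^ (1-α) + V * ((l0:ℝ) ^ (1-α) / (α-1)) := by
        apply add_le_add _ hb2
        rw [smul_eq_mul] at hb1; exact hb1
    _ = V * ((l0:ℝ) ^ (1-α) + (l0:ℝ) ^ (1-α) / (α-1)) := by ring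

-- second moment bound
include hV hα hl0 in
lemma moment_two :
    ∑ ℓ ∈ Finset.Icc 1 L, (2*(ℓ:ℝ)) * (V * ((max ℓ l0 : ℕ):ℝ) ^ (-α))
      ≤ 2*V*((l0:ℝ) ^ (2-α) + ∑ ℓ ∈ Finset.Ioc l0 L, (ℓ:ℝ) ^ (1-α)) := by
  have hl0R : (1:ℝ) ≤ (l0:ℝ) := by exact_mod_cast hl0
  rw [← Finset.sum_filter_add_sum_filter_not (Finset.Icc 1 L) (fun ℓ => ℓ ≤ l0)]
  have e2 : (Finset.Icc 1 L).filter (fun ℓ => ¬ ℓ ≤ l0) = Finset.Ioc l0 L := by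
    ext ℓ; simp only [Finset.mem_filter, Finset.mem_Icc, Finset.mem_Ioc]; omega
  have hcard : ((Finset.Icc 1 L).filter (fun ℓ => ℓ ≤ l0)).card ≤ l0 := by
    have : (Finset.Icc 1 L).filter (fun ℓ => ℓ ≤ l0) ⊆ Finset.Icc 1 l0 := by
      intro ℓ hℓ; simp only [Finset.mem_filter, Finset.mem_Icc] at hℓ ⊢; omega
    calc _ ≤ (Finset.Icc 1 l0).card := Finset.card_le_card this
      _ = l0 := by rw [Nat.card_Icc]; omega
  have hb1 : ∑ ℓ ∈ (Finset.Icc 1 L).filter (fun ℓ => ℓ ≤ l0),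
      (2*(ℓ:ℝ)) * (V * ((max ℓ l0 : ℕ):ℝ) ^ (-α)) ≤ 2*V*(l0:ℝ) ^ (2-α) := by
    have hterm : ∀ ℓ ∈ (Finset.Icc 1 L).filter (fun ℓ => ℓ ≤ l0),
        (2*(ℓ:ℝ)) * (V * ((max ℓ l0 : ℕ):ℝ) ^ (-α)) ≤ 2*(l0:ℝ) * (V * (l0:ℝ) ^ (-α)) := by
      intro ℓ hℓ
      simp only [Finset.mem_filter, Finset.mem_Icc] at hℓ
      rw [Nat.max_eq_right hℓ.2]
      have : (ℓ:ℝ) ≤ (l0:ℝ) := by exact_mod_cast hℓ.2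
      have hpos : (0:ℝ) ≤ V * (l0:ℝ) ^ (-α) :=
        mul_nonneg hV.le (Real.rpow_nonneg (Nat.cast_nonneg _) _)
      nlinarith
    calc _ ≤ ∑ _ℓ ∈ (Finset.Icc 1 L).filter (fun ℓ => ℓ ≤ l0),
          2*(l0:ℝ) * (V * (l0:ℝ) ^ (-α)) := Finset.sum_le_sum hterm
      _ = (((Finset.Icc 1 L).filter (fun ℓ => ℓ ≤ l0)).card : ℝ)
            * (2*(l0:ℝ) * (V * (l0:ℝ) ^ (-α))) := by rw [Finset.sum_const, nsmul_eq_mul]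
      _ ≤ (l0:ℝ) * (2*(l0:ℝ) * (V * (l0:ℝ) ^ (-α))) := by
          apply mul_le_mul_of_nonneg_right
          · exact_mod_cast hcard
          · exact mul_nonneg (by positivity)
              (mul_nonneg hV.le (Real.rpow_nonneg (Nat.cast_nonneg _) _))
      _ = 2*V*((l0:ℝ) ^ (1:ℝ) * ((l0:ℝ) ^ (1:ℝ) * (l0:ℝ) ^ (-α))) := by
          rw [Real.rpow_one]; ring
      _ = 2*V*(l0:ℝ) ^ (2-α) := by
          rw [← Real.rpow_add (by linarith : (0:ℝ) < (l0:ℝ)),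
            ← Real.rpow_add (by linarith : (0:ℝ) < (l0:ℝ)),
            show (1:ℝ) + (1 + -α) = 2 - α from by ring]
  have hb2 : ∑ ℓ ∈ (Finset.Icc 1 L).filter (fun ℓ => ¬ ℓ ≤ l0),
      (2*(ℓ:ℝ)) * (V * ((max ℓ l0 : ℕ):ℝ) ^ (-α))
      ≤ 2*V* ∑ ℓ ∈ Finset.Ioc l0 L, (ℓ:ℝ) ^ (1-α) := by
    rw [e2, Finset.mul_sum]
    apply Finset.sum_le_sum
    intro ℓ hℓ
    simp only [Finset.mem_Ioc] at hℓ
    rw [Nat.max_eq_left (le_of_lt hℓ.1)]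
    have hℓpos : (0:ℝ) < (ℓ:ℝ) := by
      have : 1 ≤ ℓ := by omega
      exact_mod_cast Nat.lt_of_lt_of_le Nat.zero_lt_one this
    have : (ℓ:ℝ) ^ (1-α) = (ℓ:ℝ) ^ (1:ℝ) * (ℓ:ℝ) ^ (-α) := by
      rw [← Real.rpow_add hℓpos, show (1:ℝ) + -α = 1 - α from by ring]
    rw [this, Real.rpow_one]
    ring_nf
    nlinarith [Real.rpow_nonneg (le_of_lt hℓpos) (-α)]
  calc _ ≤ 2*V*(l0:ℝ) ^ (2-α) + 2*V* ∑ ℓ ∈ Finset.Ioc l0 L, (ℓ:ℝ) ^ (1-α) :=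
        add_le_add hb1 hb2
    _ = _ := by ring

end moments


lemma ceil_up {x : ℝ} (hx : 1 ≤ x) : (⌈x⌉₊:ℝ) ≤ 2*x := by
  have := Nat.ceil_lt_add_one (le_trans zero_le_one hx)
  linarith

lemma one_le_ceil_cast {x : ℝ} (hx : 1 ≤ x) : (1:ℝ) ≤ (⌈x⌉₊:ℝ) :=
  le_trans hx (Nat.le_ceil x)

section rates
variable {c V α β : ℝ}

lemma bad1_rate (hc : 0 < c) (hV : 0 < V) (hα : 1 < α) (hβ0 : 0 < β) (hβ1 : β < 1)
    (n : ℕ) (hn : 1 ≤ n) :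
    (⌈c*(n:ℝ)⌉₊:ℝ) * (V * ((⌈(n:ℝ)^(β+(1-β)/α)⌉₊:ℝ)) ^ (-α))
      ≤ (c+1)*V*(n:ℝ)^(β*(1-α)) := by
  have hnR : (1:ℝ) ≤ (n:ℝ) := by exact_mod_cast hn
  set γ := (1-β)/α with hγ
  set ρ := β + γ with hρdef
  have hα0 : (0:ℝ) < α := by linarith
  have hγ0 : 0 < γ := div_pos (by linarith) hα0
  have hρ0 : 0 < ρ := by positivity
  have hnρ1 : (1:ℝ) ≤ (n:ℝ)^ρ := Real.one_le_rpow hnR hρ0.le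
  have hL : (n:ℝ)^ρ ≤ (⌈(n:ℝ)^ρ⌉₊:ℝ) := Nat.le_ceil _
  have hLpow : ((⌈(n:ℝ)^ρ⌉₊:ℝ)) ^ (-α) ≤ ((n:ℝ)^ρ) ^ (-α) :=
    Real.rpow_le_rpow_of_nonpos (by linarith) hL (by linarith)
  have hN : (⌈c*(n:ℝ)⌉₊:ℝ) ≤ (c+1)*(n:ℝ) := by
    have h0 : (0:ℝ) ≤ c*(n:ℝ) := by positivity
    have := Nat.ceil_lt_add_one h0
    nlinarith
  have hNpos : (0:ℝ) ≤ (⌈c*(n:ℝ)⌉₊:ℝ) := Nat.cast_nonneg _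
  have hexp : ((n:ℝ)^ρ) ^ (-α) = (n:ℝ)^(ρ*(-α)) := (Real.rpow_mul (by linarith) _ _).symm
  have hkey : (n:ℝ) * (n:ℝ)^(ρ*(-α)) = (n:ℝ)^(β*(1-α)) := by
    rw [show (n:ℝ) * (n:ℝ)^(ρ*(-α)) = (n:ℝ)^(1:ℝ) * (n:ℝ)^(ρ*(-α)) by rw [Real.rpow_one],
      ← Real.rpow_add (by linarith)]
    congr 1
    rw [hρdef, hγ]
    field_simp
    ring
  calc (⌈c*(n:ℝ)⌉₊:ℝ) * (V * ((⌈(n:ℝ)^ρ⌉₊:ℝ)) ^ (-α))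
      ≤ ((c+1)*(n:ℝ)) * (V * ((n:ℝ)^ρ) ^ (-α)) := by
        apply mul_le_mul hN (mul_le_mul_of_nonneg_left hLpow hV.le)
          (mul_nonneg hV.le (Real.rpow_nonneg (Nat.cast_nonneg _) _)) (by positivity)
    _ = (c+1)*V*((n:ℝ) * (n:ℝ)^(ρ*(-α))) := by rw [hexp]; ring
    _ = (c+1)*V*(n:ℝ)^(β*(1-α)) := by rw [hkey]

lemma mean_rate (hc : 0 < c) (hV : 0 < V) (hα : 1 < α) (hβ0 : 0 < β) (hβ1 : β < 1)
    (n : ℕ) (hn : 1 ≤ n) :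
    (⌈c*(n:ℝ)⌉₊:ℝ) * (V * ((⌈(n:ℝ)^((1-β)/α)⌉₊:ℝ) ^ (1-α)
        + (⌈(n:ℝ)^((1-β)/α)⌉₊:ℝ) ^ (1-α) / (α-1)))
      ≤ (V*(1+1/(α-1))*(c+1)) * (n:ℝ)^(β+(1-β)/α) := by
  have hnR : (1:ℝ) ≤ (n:ℝ) := by exact_mod_cast hn
  set γ := (1-β)/α with hγ
  have hα0 : (0:ℝ) < α := by linarith
  have hγ0 : 0 < γ := div_pos (by linarith) hα0
  have hnγ1 : (1:ℝ) ≤ (n:ℝ)^γ := Real.one_le_rpow hnR hγ0.le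
  have hl : (n:ℝ)^γ ≤ (⌈(n:ℝ)^γ⌉₊:ℝ) := Nat.le_ceil _
  have hpow : ((⌈(n:ℝ)^γ⌉₊:ℝ)) ^ (1-α) ≤ ((n:ℝ)^γ) ^ (1-α) :=
    Real.rpow_le_rpow_of_nonpos (by linarith) hl (by linarith)
  have hN : (⌈c*(n:ℝ)⌉₊:ℝ) ≤ (c+1)*(n:ℝ) := by
    have h0 : (0:ℝ) ≤ c*(n:ℝ) := by positivity
    have := Nat.ceil_lt_add_one h0
    nlinarith
  have hA1 : (0:ℝ) < 1 + 1/(α-1) := by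
    have : (0:ℝ) < 1/(α-1) := div_pos one_pos (by linarith)
    linarith
  have hexp : ((n:ℝ)^γ) ^ (1-α) = (n:ℝ)^(γ*(1-α)) := (Real.rpow_mul (by linarith) _ _).symm
  have hkey : (n:ℝ) * (n:ℝ)^(γ*(1-α)) = (n:ℝ)^(β+γ) := by
    rw [show (n:ℝ) * (n:ℝ)^(γ*(1-α)) = (n:ℝ)^(1:ℝ) * (n:ℝ)^(γ*(1-α)) by rw [Real.rpow_one],
      ← Real.rpow_add (by linarith)]
    congr 1
    rw [hγ]
    field_simp
    ring
  have hX0 : (0:ℝ) ≤ (⌈(n:ℝ)^γ⌉₊:ℝ) ^ (1-α) := Real.rpow_nonneg (Nat.cast_nonneg _) _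
  have hb : V * ((⌈(n:ℝ)^γ⌉₊:ℝ) ^ (1-α) + (⌈(n:ℝ)^γ⌉₊:ℝ) ^ (1-α) / (α-1))
      ≤ V * (1+1/(α-1)) * ((n:ℝ)^γ) ^ (1-α) := by
    calc V * ((⌈(n:ℝ)^γ⌉₊:ℝ) ^ (1-α) + (⌈(n:ℝ)^γ⌉₊:ℝ) ^ (1-α) / (α-1))
        = (V * (1+1/(α-1))) * (⌈(n:ℝ)^γ⌉₊:ℝ) ^ (1-α) := by
          have hne : α-1 ≠ 0 := by linarith
          field_simp
      _ ≤ (V * (1+1/(α-1))) * ((n:ℝ)^γ) ^ (1-α) :=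
          mul_le_mul_of_nonneg_left hpow (mul_nonneg hV.le hA1.le)
      _ = V * (1+1/(α-1)) * ((n:ℝ)^γ) ^ (1-α) := by ring
  calc _ ≤ ((c+1)*(n:ℝ)) * (V * (1+1/(α-1)) * ((n:ℝ)^γ) ^ (1-α)) := by
        apply mul_le_mul hN hb _ (mul_nonneg (by linarith) (by linarith))
        exact mul_nonneg hV.le (add_nonneg hX0 (div_nonneg hX0 (by linarith)))
    _ = (V*(1+1/(α-1))*(c+1)) * ((n:ℝ) * (n:ℝ)^(γ*(1-α))) := by rw [hexp]; ring
    _ = _ := by rw [hkey]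

lemma det_rate (hβ0 : 0 < β) (hβ1 : β < 1) (hα : 1 < α)
    (n : ℕ) (hn : 1 ≤ n) :
    (⌈(n:ℝ)^β⌉₊:ℝ) * (⌈(n:ℝ)^((1-β)/α)⌉₊:ℝ) ≤ 4*(n:ℝ)^(β+(1-β)/α) := by
  have hnR : (1:ℝ) ≤ (n:ℝ) := by exact_mod_cast hn
  set γ := (1-β)/α with hγ
  have hα0 : (0:ℝ) < α := by linarith
  have hγ0 : 0 < γ := div_pos (by linarith) hα0
  have h1 : (1:ℝ) ≤ (n:ℝ)^β := Real.one_le_rpow hnR hβ0.le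
  have h2 : (1:ℝ) ≤ (n:ℝ)^γ := Real.one_le_rpow hnR hγ0.le
  have hm : (⌈(n:ℝ)^β⌉₊:ℝ) ≤ 2*(n:ℝ)^β := ceil_up h1
  have hl : (⌈(n:ℝ)^γ⌉₊:ℝ) ≤ 2*(n:ℝ)^γ := ceil_up h2
  have hmul : (n:ℝ)^β * (n:ℝ)^γ = (n:ℝ)^(β+γ) := (Real.rpow_add (by linarith) _ _).symm
  calc (⌈(n:ℝ)^β⌉₊:ℝ) * (⌈(n:ℝ)^γ⌉₊:ℝ) ≤ (2*(n:ℝ)^β) * (2*(n:ℝ)^γ) :=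
        mul_le_mul hm hl (Nat.cast_nonneg _) (by positivity)
    _ = 4*((n:ℝ)^β * (n:ℝ)^γ) := by ring
    _ = 4*(n:ℝ)^(β+γ) := by rw [hmul]
end rates

lemma var_rate {c V α β : ℝ} (hc : 0 < c) (hV : 0 < V) (hα : 1 < α) (hβ0 : 0 < β)
    (hβ1 : β < 1) :
    ∃ D : ℝ, 0 < D ∧ ∃ δ : ℝ, 0 < δ ∧ ∀ n : ℕ, 1 ≤ n →
      (⌈c*(n:ℝ)⌉₊:ℝ) * (2*V*((⌈(n:ℝ)^((1-β)/α)⌉₊:ℝ) ^ (2-α)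
          + ∑ ℓ ∈ Finset.Ioc ⌈(n:ℝ)^((1-β)/α)⌉₊ ⌈(n:ℝ)^(β+(1-β)/α)⌉₊, (ℓ:ℝ) ^ (1-α)))
        ≤ (D * (n:ℝ)^(-δ)) * ((n:ℝ)^(β+(1-β)/α))^2 := by
  have hα0 : (0:ℝ) < α := by linarith
  set γ := (1-β)/α with hγdef
  set ρ := β + γ with hρdef
  have hγ0 : 0 < γ := div_pos (by linarith) hα0
  have hρ0 : 0 < ρ := by positivity
  set δ := min β (β*(α-1)/2) with hδdef
  have hδ0 : 0 < δ := lt_min hβ0 (by nlinarith)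
  have hδβ : δ ≤ β := min_le_left _ _
  -- common facts depending on n
  have common : ∀ n : ℕ, 1 ≤ n →
      (1:ℝ) ≤ (n:ℝ) ∧ (1:ℝ) ≤ (n:ℝ)^γ ∧ (1:ℝ) ≤ (n:ℝ)^ρ ∧
      (n:ℝ)^γ ≤ (⌈(n:ℝ)^γ⌉₊:ℝ) ∧ (⌈(n:ℝ)^γ⌉₊:ℝ) ≤ 2*(n:ℝ)^γ ∧
      (n:ℝ)^ρ ≤ (⌈(n:ℝ)^ρ⌉₊:ℝ) ∧ (⌈(n:ℝ)^ρ⌉₊:ℝ) ≤ 2*(n:ℝ)^ρ ∧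
      (⌈c*(n:ℝ)⌉₊:ℝ) ≤ (c+1)*(n:ℝ) := by
    intro n hn
    have hnR : (1:ℝ) ≤ (n:ℝ) := by exact_mod_cast hn
    have h2 : (1:ℝ) ≤ (n:ℝ)^γ := Real.one_le_rpow hnR hγ0.le
    have h3 : (1:ℝ) ≤ (n:ℝ)^ρ := Real.one_le_rpow hnR hρ0.le
    refine ⟨hnR, h2, h3, Nat.le_ceil _, ceil_up h2, Nat.le_ceil _, ceil_up h3, ?_⟩
    have h0 : (0:ℝ) ≤ c*(n:ℝ) := by positivity
    have := Nat.ceil_lt_add_one h0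
    nlinarith
  rcases le_or_gt α (5/2) with hcase | hcase
  · -- case 1 < α ≤ 5/2
    set s := (α-1)/2 with hsdef
    have hs0 : 0 < s := by simp only [hsdef]; linarith
    have hs1 : s < 1 := by simp only [hsdef]; linarith
    refine ⟨4*V*(c+1)*(1+1/(1-s)), by
      have : 0 < 1/(1-s) := div_pos one_pos (by linarith)
      positivity, δ, hδ0, ?_⟩
    intro n hn
    obtain ⟨hnR, hnγ1, hnρ1, hl0low, hl0up, hLlow, hLup, hN⟩ := common n hn
    set l0 := ⌈(n:ℝ)^γ⌉₊
    set L := ⌈(n:ℝ)^ρ⌉₊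
    have hnpos : (0:ℝ) < (n:ℝ) := by linarith
    have hnγpos : (0:ℝ) < (n:ℝ)^γ := by linarith
    have hnρpos : (0:ℝ) < (n:ℝ)^ρ := by linarith
    -- bound on l0^(2-α)
    have hT1 : (l0:ℝ) ^ (2-α) ≤ 2 * ((n:ℝ)^γ) ^ (2-α) :=
      rpow_between hnγ1 hl0low hl0up (by linarith)
    -- bound on the tail sum
    have hTA : ∑ ℓ ∈ Finset.Ioc l0 L, (ℓ:ℝ) ^ (1-α)
        ≤ ((n:ℝ)^γ) ^ (-s) * (2 * ((n:ℝ)^ρ) ^ (1-s)) / (1-s) := by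
      have step1 : ∀ ℓ ∈ Finset.Ioc l0 L, (ℓ:ℝ) ^ (1-α)
          ≤ ((n:ℝ)^γ) ^ (-s) * (ℓ:ℝ) ^ (-s) := by
        intro ℓ hℓ
        simp only [Finset.mem_Ioc] at hℓ
        have hl0ℓ : (l0:ℝ) ≤ (ℓ:ℝ) := by exact_mod_cast le_of_lt hℓ.1
        have hℓpos : (0:ℝ) < (ℓ:ℝ) := lt_of_lt_of_le (by linarith) hl0ℓ
        have hsplit : (ℓ:ℝ) ^ (1-α) = (ℓ:ℝ) ^ (-s) * (ℓ:ℝ) ^ (-s) := by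
          rw [← Real.rpow_add hℓpos]
          congr 1
          simp only [hsdef]; ring
        rw [hsplit]
        apply mul_le_mul_of_nonneg_right _ (Real.rpow_nonneg hℓpos.le _)
        exact Real.rpow_le_rpow_of_nonpos hnγpos (le_trans hl0low hl0ℓ) (by linarith)
      calc ∑ ℓ ∈ Finset.Ioc l0 L, (ℓ:ℝ) ^ (1-α)
          ≤ ∑ ℓ ∈ Finset.Ioc l0 L, ((n:ℝ)^γ) ^ (-s) * (ℓ:ℝ) ^ (-s) :=
            Finset.sum_le_sum step1
        _ = ((n:ℝ)^γ) ^ (-s) * ∑ ℓ ∈ Finset.Ioc l0 L, (ℓ:ℝ) ^ (-s) := by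
            rw [Finset.mul_sum]
        _ ≤ ((n:ℝ)^γ) ^ (-s) * ∑ ℓ ∈ Finset.Icc 1 L, (ℓ:ℝ) ^ (-s) := by
            apply mul_le_mul_of_nonneg_left _ (Real.rpow_nonneg hnγpos.le _)
            apply Finset.sum_le_sum_of_subset_of_nonneg
            · intro ℓ hℓ
              simp only [Finset.mem_Ioc] at hℓ
              simp only [Finset.mem_Icc]
              omega
            · intro ℓ _ _
              exact Real.rpow_nonneg (Nat.cast_nonneg _) _
        _ ≤ ((n:ℝ)^γ) ^ (-s) * ((L:ℝ) ^ (1-s) / (1-s)) := by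
            apply mul_le_mul_of_nonneg_left (sum_rpow_le hs0 hs1 L)
              (Real.rpow_nonneg hnγpos.le _)
        _ ≤ ((n:ℝ)^γ) ^ (-s) * (2 * ((n:ℝ)^ρ) ^ (1-s)) / (1-s) := by
            rw [mul_div_assoc]
            apply mul_le_mul_of_nonneg_left _ (Real.rpow_nonneg hnγpos.le _)
            apply div_le_div_of_nonneg_right _ (by linarith)
            exact rpow_between hnρ1 hLlow hLup (by linarith)
    -- assemble case A
    set nR := (n:ℝ) with hnRdef
    set P1 := ((nR)^γ) ^ (2-α) with hP1def
    set P2 := ((nR)^γ) ^ (-s) * ((nR)^ρ) ^ (1-s) with hP2def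
    set T := ∑ ℓ ∈ Finset.Ioc l0 L, (ℓ:ℝ) ^ (1-α) with hTdef
    have hTnonneg : (0:ℝ) ≤ (l0:ℝ) ^ (2-α) + T :=
      add_nonneg (Real.rpow_nonneg (Nat.cast_nonneg _) _)
        (Finset.sum_nonneg fun ℓ _ => Real.rpow_nonneg (Nat.cast_nonneg _) _)
    have hsum : (l0:ℝ) ^ (2-α) + T ≤ 2*P1 + 2*P2/(1-s) := by
      have h2 : T ≤ 2*P2/(1-s) := by
        refine hTA.trans (le_of_eq ?_)
        rw [hP2def]; ring
      linarith [hT1]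
    have hc1 : (0:ℝ) ≤ (c+1)*nR := mul_nonneg (by linarith) (by linarith)
    have hstep : (⌈c*nR⌉₊:ℝ) * (2*V*((l0:ℝ) ^ (2-α) + T))
        ≤ ((c+1)*nR) * (2*V*(2*P1 + 2*P2/(1-s))) := by
      apply mul_le_mul hN _ _ hc1
      · exact mul_le_mul_of_nonneg_left hsum (by positivity)
      · exact mul_nonneg (by positivity) hTnonneg
    have hP1' : nR * P1 = nR ^ (1+γ*(2-α)) := by
      rw [hP1def, ← Real.rpow_mul (by linarith : (0:ℝ) ≤ nR),
        show nR * nR ^ (γ*(2-α)) = nR ^ (1:ℝ) * nR ^ (γ*(2-α)) by rw [Real.rpow_one],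
        ← Real.rpow_add hnpos]
    have hP2' : nR * P2 = nR ^ (1+(γ*(-s)+ρ*(1-s))) := by
      rw [hP2def, ← Real.rpow_mul (by linarith : (0:ℝ) ≤ nR),
        ← Real.rpow_mul (by linarith : (0:ℝ) ≤ nR),
        ← Real.rpow_add hnpos,
        show nR * nR ^ (γ*(-s)+ρ*(1-s)) = nR ^ (1:ℝ) * nR ^ (γ*(-s)+ρ*(1-s)) by
          rw [Real.rpow_one],
        ← Real.rpow_add hnpos]
    have hid1 : 1+γ*(2-α) = 2*ρ-β := by
      rw [hρdef, hγdef]; field_simp; ring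
    have hid2 : 1+(γ*(-s)+ρ*(1-s)) = 2*ρ-β*s := by
      rw [hρdef, hγdef, hsdef]; field_simp; ring
    have hE1 : nR ^ (1+γ*(2-α)) ≤ nR ^ (2*ρ-δ) := by
      apply Real.rpow_le_rpow_of_exponent_le hnR
      rw [hid1]; linarith [hδβ]
    have hE2 : nR ^ (1+(γ*(-s)+ρ*(1-s))) ≤ nR ^ (2*ρ-δ) := by
      apply Real.rpow_le_rpow_of_exponent_le hnR
      rw [hid2]
      have h1 : δ ≤ β*(α-1)/2 := by rw [hδdef]; exact min_le_right _ _
      have h2 : β*(α-1)/2 = β*s := by rw [hsdef]; ring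
      linarith
    have h4 : (0:ℝ) ≤ 4*V*(c+1) :=
      mul_nonneg (mul_nonneg (by norm_num) hV.le) (by linarith)
    have hsq : ((nR)^ρ)^2 = nR^(2*ρ) := by
      rw [sq, ← Real.rpow_add hnpos]; congr 1; ring
    have hR : (4*V*(c+1)*(1+1/(1-s)) * nR^(-δ)) * ((nR)^ρ)^2
        = (4*V*(c+1)*(1+1/(1-s))) * nR^(2*ρ-δ) := by
      rw [hsq, mul_assoc, ← Real.rpow_add hnpos, show -δ+2*ρ = 2*ρ-δ by ring]
    calc (⌈c*nR⌉₊:ℝ) * (2*V*((l0:ℝ) ^ (2-α) + T))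
        ≤ ((c+1)*nR) * (2*V*(2*P1 + 2*P2/(1-s))) := hstep
      _ = (4*V*(c+1))*(nR*P1) + (4*V*(c+1)/(1-s))*(nR*P2) := by
          have hs1ne : (1:ℝ)-s ≠ 0 := by linarith
          field_simp
          ring
      _ = (4*V*(c+1))*nR^(1+γ*(2-α)) + (4*V*(c+1)/(1-s))*nR^(1+(γ*(-s)+ρ*(1-s))) := by
          rw [hP1', hP2']
      _ ≤ (4*V*(c+1))*nR^(2*ρ-δ) + (4*V*(c+1)/(1-s))*nR^(2*ρ-δ) := by
          refine add_le_add (mul_le_mul_of_nonneg_left hE1 h4)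
            (mul_le_mul_of_nonneg_left hE2 (div_nonneg h4 (by linarith)))
      _ = (4*V*(c+1)*(1+1/(1-s))) * nR^(2*ρ-δ) := by
          have hs1ne : (1:ℝ)-s ≠ 0 := by linarith
          field_simp
      _ = (4*V*(c+1)*(1+1/(1-s)) * nR^(-δ)) * ((nR)^ρ)^2 := hR.symm
  · -- case α > 5/2
    have hα2 : (2:ℝ) < α := by linarith
    refine ⟨2*V*(c+1)*(1+1/(α-2)), by
      have h1 : (0:ℝ) < 1/(α-2) := div_pos one_pos (by linarith)
      exact mul_pos (mul_pos (mul_pos two_pos hV) (by linarith)) (by linarith), δ, hδ0, ?_⟩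
    intro n hn
    obtain ⟨hnR, hnγ1, hnρ1, hl0low, hl0up, hLlow, hLup, hN⟩ := common n hn
    set nR := (n:ℝ) with hnRdef
    have hnpos : (0:ℝ) < nR := by linarith
    have hnγpos : (0:ℝ) < nR^γ := by linarith
    set l0 := ⌈nR^γ⌉₊ with hl0def
    set L := ⌈nR^ρ⌉₊ with hLdef
    have hl01 : 1 ≤ l0 := Nat.one_le_ceil_iff.mpr hnγpos
    set T := ∑ ℓ ∈ Finset.Ioc l0 L, (ℓ:ℝ) ^ (1-α) with hTdef
    have hTb : T ≤ (l0:ℝ) ^ (2-α) / (α-2) := by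
      have heq : T = ∑ ℓ ∈ Finset.Ioc l0 L, (ℓ:ℝ) ^ (-(α-1)) := by
        rw [hTdef]
        exact Finset.sum_congr rfl fun ℓ _ => by rw [show (1:ℝ)-α = -(α-1) by ring]
      rw [heq]
      have := sum_rpow_tail_le (q := α-1) (by linarith) l0 hl01 L
      rwa [show (1:ℝ)-(α-1) = 2-α by ring, show α-1-1 = α-2 by ring] at this
    have hl0pow : (l0:ℝ) ^ (2-α) ≤ (nR^γ) ^ (2-α) :=
      Real.rpow_le_rpow_of_nonpos hnγpos hl0low (by linarith)
    have hP1nn : (0:ℝ) ≤ (nR^γ) ^ (2-α) := Real.rpow_nonneg hnγpos.le _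
    have hsum : (l0:ℝ) ^ (2-α) + T ≤ (1+1/(α-2)) * ((nR^γ) ^ (2-α)) := by
      have h2 : T ≤ (nR^γ) ^ (2-α) / (α-2) := by
        refine hTb.trans (div_le_div_of_nonneg_right hl0pow (by linarith))
      have h3 : (1+1/(α-2)) * ((nR^γ) ^ (2-α))
          = (nR^γ) ^ (2-α) + (nR^γ) ^ (2-α) / (α-2) := by ring
      linarith
    have hTnonneg : (0:ℝ) ≤ (l0:ℝ) ^ (2-α) + T :=
      add_nonneg (Real.rpow_nonneg (Nat.cast_nonneg _) _)
        (Finset.sum_nonneg fun ℓ _ => Real.rpow_nonneg (Nat.cast_nonneg _) _)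
    have hc1 : (0:ℝ) ≤ (c+1)*nR := mul_nonneg (by linarith) (by linarith)
    have hcoeff : (0:ℝ) ≤ 2*V*(c+1)*(1+1/(α-2)) := by
      have h1 : (0:ℝ) < 1/(α-2) := div_pos one_pos (by linarith)
      have h2 : (0:ℝ) ≤ 2*V*(c+1) := mul_nonneg (mul_nonneg (by norm_num) hV.le) (by linarith)
      exact mul_nonneg h2 (by linarith)
    have hP1' : nR * ((nR^γ) ^ (2-α)) = nR ^ (1+γ*(2-α)) := by
      rw [← Real.rpow_mul (by linarith : (0:ℝ) ≤ nR),
        show nR * nR ^ (γ*(2-α)) = nR ^ (1:ℝ) * nR ^ (γ*(2-α)) by rw [Real.rpow_one],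
        ← Real.rpow_add hnpos]
    have hid1 : 1+γ*(2-α) = 2*ρ-β := by
      rw [hρdef, hγdef]; field_simp; ring
    have hE1 : nR ^ (1+γ*(2-α)) ≤ nR ^ (2*ρ-δ) := by
      apply Real.rpow_le_rpow_of_exponent_le hnR
      rw [hid1]; linarith [hδβ]
    have hsq : ((nR)^ρ)^2 = nR^(2*ρ) := by
      rw [sq, ← Real.rpow_add hnpos]; congr 1; ring
    have hR : (2*V*(c+1)*(1+1/(α-2)) * nR^(-δ)) * ((nR)^ρ)^2
        = (2*V*(c+1)*(1+1/(α-2))) * nR^(2*ρ-δ) := by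
      rw [hsq, mul_assoc, ← Real.rpow_add hnpos, show -δ+2*ρ = 2*ρ-δ by ring]
    calc (⌈c*nR⌉₊:ℝ) * (2*V*((l0:ℝ) ^ (2-α) + T))
        ≤ ((c+1)*nR) * (2*V*((1+1/(α-2)) * ((nR^γ) ^ (2-α)))) := by
          apply mul_le_mul hN _ _ hc1
          · exact mul_le_mul_of_nonneg_left hsum (by positivity)
          · exact mul_nonneg (by positivity) hTnonneg
      _ = (2*V*(c+1)*(1+1/(α-2))) * (nR * ((nR^γ) ^ (2-α))) := by ring
      _ = (2*V*(c+1)*(1+1/(α-2))) * nR ^ (1+γ*(2-α)) := by rw [hP1']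
      _ ≤ (2*V*(c+1)*(1+1/(α-2))) * nR ^ (2*ρ-δ) :=
          mul_le_mul_of_nonneg_left hE1 hcoeff
      _ = (2*V*(c+1)*(1+1/(α-2)) * nR^(-δ)) * ((nR)^ρ)^2 := hR.symm



lemma one_n {Ω : Type*} [MeasurableSpace Ω] (P : Measure Ω) [IsProbabilityMeasure P]
    {V α : ℝ} (hV : 0 < V) (hα : 1 < α)
    {N : ℕ} (ξ : Fin N → Ω → ℕ) (hmeas : ∀ i, Measurable (ξ i))
    (hpair : ∀ i j, i ≠ j → IndepFun (ξ i) (ξ j) P)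
    (htail : ∀ i, ∀ ℓ : ℕ, 1 ≤ ℓ → P {ω | ℓ ≤ ξ i ω} ≤ ENNReal.ofReal (V * (ℓ : ℝ) ^ (-α)))
    (l0 L : ℕ) (hl0 : 1 ≤ l0) (hL : 1 ≤ L) (t : ℝ) (ht : 0 < t) :
    ∃ B : Set Ω, MeasurableSet B ∧
      P B ≤ ENNReal.ofReal ((N:ℝ) * (V * (L:ℝ)^(-α)))
          + ENNReal.ofReal ((N:ℝ) * (2*V*((l0:ℝ)^(2-α)
              + ∑ ℓ ∈ Finset.Ioc l0 L, (ℓ:ℝ)^(1-α))) / t^2) ∧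
      ∀ ω, ω ∉ B → ∀ A : Finset (Fin N),
        (∑ i ∈ A, (ξ i ω : ℝ)) ≤ (A.card:ℝ) * (l0:ℝ)
          + ((N:ℝ) * (V * ((l0:ℝ)^(1-α) + (l0:ℝ)^(1-α)/(α-1)))) + t := by
  classical
  set F : ℕ → ℕ := fun k => if l0 ≤ k then min k L else 0 with hF
  set X : Fin N → Ω → ℝ := fun i => (fun k : ℕ => ((F k : ℕ) : ℝ)) ∘ ξ i with hX
  have hgmeas : ∀ i, Measurable (fun ω => F (ξ i ω)) :=
    fun i => by exact (measurable_from_nat (f := F)).comp (hmeas i)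
  have hXmeas : ∀ i, Measurable (X i) :=
    fun i => by exact (measurable_from_nat (f := fun k : ℕ => ((F k : ℕ) : ℝ))).comp (hmeas i)
  have hFle : ∀ k, F k ≤ L := by
    intro k
    rw [hF]
    dsimp only
    split
    · exact min_le_right _ _
    · exact Nat.zero_le _
  have hXnonneg : ∀ i ω, 0 ≤ X i ω := fun i ω => Nat.cast_nonneg _
  have hXle : ∀ i ω, X i ω ≤ (L:ℝ) := by
    intro i ω
    exact_mod_cast Nat.cast_le.mpr (hFle (ξ i ω))
  have hXmem : ∀ i, MemLp (X i) 2 P := by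
    intro i
    apply MemLp.of_bound (hXmeas i).aestronglyMeasurable (L:ℝ)
    filter_upwards with ω
    rw [Real.norm_eq_abs, abs_of_nonneg (hXnonneg i ω)]
    exact hXle i ω
  set S : Ω → ℝ := ∑ i ∈ Finset.univ, X i with hS
  have hSapp : ∀ ω, S ω = ∑ i ∈ Finset.univ, X i ω := by
    intro ω; rw [hS]; simp
  have hSmeas : Measurable S := by
    have h1 : S = fun ω => ∑ i ∈ Finset.univ, X i ω := by funext ω; exact hSapp ω
    rw [h1]; exact Finset.measurable_sum _ fun i _ => hXmeas i
  have hSmem : MemLp S 2 P := memLp_finset_sum' _ fun i _ => hXmem i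
  -- tail bound for the truncated variables
  have htailX : ∀ i, ∀ ℓ ∈ Finset.Icc 1 L,
      (P {ω | ℓ ≤ F (ξ i ω)}).toReal ≤ V * ((max ℓ l0 : ℕ):ℝ) ^ (-α) := by
    intro i ℓ hℓ
    simp only [Finset.mem_Icc] at hℓ
    exact trunc_tail_le P hV (ξ i) l0 L (htail i) ℓ hℓ.1
  -- first moment
  have hEX : ∀ i, ∫ ω, X i ω ∂P ≤ V * ((l0:ℝ) ^ (1-α) + (l0:ℝ) ^ (1-α) / (α-1)) := by
    intro i
    have := integral_cast_eq Ω P (fun ω => F (ξ i ω)) (hgmeas i) L (fun ω => hFle _)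
    calc ∫ ω, X i ω ∂P = ∑ ℓ ∈ Finset.Icc 1 L, (P {ω | ℓ ≤ F (ξ i ω)}).toReal := this
      _ ≤ ∑ ℓ ∈ Finset.Icc 1 L, V * ((max ℓ l0 : ℕ):ℝ) ^ (-α) :=
          Finset.sum_le_sum (htailX i)
      _ ≤ _ := moment_one hV hα l0 L hl0
  -- second moment
  have hEX2 : ∀ i, ∫ ω, (X i ω)^2 ∂P
      ≤ 2*V*((l0:ℝ) ^ (2-α) + ∑ ℓ ∈ Finset.Ioc l0 L, (ℓ:ℝ) ^ (1-α)) := by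
    intro i
    have h0 := integral_sq_cast_eq Ω P (fun ω => F (ξ i ω)) (hgmeas i) L (fun ω => hFle _)
    calc ∫ ω, (X i ω)^2 ∂P
        = ∑ ℓ ∈ Finset.Icc 1 L, (2*(ℓ:ℝ) - 1) * (P {ω | ℓ ≤ F (ξ i ω)}).toReal := h0
      _ ≤ ∑ ℓ ∈ Finset.Icc 1 L, (2*(ℓ:ℝ)) * (V * ((max ℓ l0 : ℕ):ℝ) ^ (-α)) := by
          apply Finset.sum_le_sum
          intro ℓ hℓ
          simp only [Finset.mem_Icc] at hℓ
          have h1 : (1:ℝ) ≤ (ℓ:ℝ) := by exact_mod_cast hℓ.1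
          have ht1 := htailX i ℓ (by simp only [Finset.mem_Icc]; omega)
          have ht0 : (0:ℝ) ≤ (P {ω | ℓ ≤ F (ξ i ω)}).toReal := ENNReal.toReal_nonneg
          have hv0 : (0:ℝ) ≤ V * ((max ℓ l0 : ℕ):ℝ) ^ (-α) :=
            mul_nonneg hV.le (Real.rpow_nonneg (Nat.cast_nonneg _) _)
          nlinarith
      _ ≤ _ := moment_two hV hα l0 L hl0
  -- variance of the sum
  have hvar : variance S P ≤ (N:ℝ) * (2*V*((l0:ℝ) ^ (2-α)
      + ∑ ℓ ∈ Finset.Ioc l0 L, (ℓ:ℝ) ^ (1-α))) := by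
    have hpairX : Set.Pairwise ↑(Finset.univ : Finset (Fin N))
        fun i j => IndepFun (X i) (X j) P := by
      intro i _ j _ hij
      exact (hpair i j hij).comp (measurable_from_nat (f := fun k : ℕ => ((F k : ℕ) : ℝ)))
        (measurable_from_nat (f := fun k : ℕ => ((F k : ℕ) : ℝ)))
    rw [hS, IndepFun.variance_sum (fun i _ => hXmem i) hpairX]
    calc ∑ i ∈ Finset.univ, variance (X i) P
        ≤ ∑ i ∈ (Finset.univ : Finset (Fin N)), (2*V*((l0:ℝ) ^ (2-α)
            + ∑ ℓ ∈ Finset.Ioc l0 L, (ℓ:ℝ) ^ (1-α))) := by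
          apply Finset.sum_le_sum
          intro i _
          refine (variance_le_expectation_sq (hXmeas i).aestronglyMeasurable).trans ?_
          exact hEX2 i
      _ = (N:ℝ) * (2*V*((l0:ℝ) ^ (2-α)
            + ∑ ℓ ∈ Finset.Ioc l0 L, (ℓ:ℝ) ^ (1-α))) := by
          rw [Finset.sum_const, Finset.card_univ, Fintype.card_fin, nsmul_eq_mul]
  -- mean of the sum
  have hmean : P[S] ≤ (N:ℝ) * (V * ((l0:ℝ) ^ (1-α) + (l0:ℝ) ^ (1-α) / (α-1))) := by
    have h1 : P[S] = ∑ i ∈ Finset.univ, ∫ ω, X i ω ∂P := by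
      rw [hS]
      rw [show (∫ ω, (∑ i ∈ Finset.univ, X i) ω ∂P)
          = ∫ ω, ∑ i ∈ Finset.univ, X i ω ∂P from by simp]
      exact integral_finset_sum _ fun i _ => ((hXmem i).integrable one_le_two)
    rw [h1]
    calc ∑ i ∈ Finset.univ, ∫ ω, X i ω ∂P
        ≤ ∑ i ∈ (Finset.univ : Finset (Fin N)),
            (V * ((l0:ℝ) ^ (1-α) + (l0:ℝ) ^ (1-α) / (α-1))) :=
          Finset.sum_le_sum fun i _ => hEX i
      _ = _ := by rw [Finset.sum_const, Finset.card_univ, Fintype.card_fin, nsmul_eq_mul]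
  -- the bad set
  refine ⟨(⋃ i, {ω | L ≤ ξ i ω}) ∪ {ω | t ≤ |S ω - P[S]|}, ?_, ?_, ?_⟩
  · apply MeasurableSet.union
    · exact MeasurableSet.iUnion fun i => (hmeas i) (by trivial)
    · exact measurableSet_le measurable_const ((hSmeas.sub measurable_const).abs)
  · refine (measure_union_le _ _).trans (add_le_add ?_ ?_)
    · calc P (⋃ i, {ω | L ≤ ξ i ω}) ≤ ∑' i, P {ω | L ≤ ξ i ω} := measure_iUnion_le _
        _ = ∑ i ∈ Finset.univ, P {ω | L ≤ ξ i ω} := tsum_fintype _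
        _ ≤ ∑ i ∈ (Finset.univ : Finset (Fin N)), ENNReal.ofReal (V * (L:ℝ)^(-α)) :=
            Finset.sum_le_sum fun i _ => htail i L hL
        _ = N * ENNReal.ofReal (V * (L:ℝ)^(-α)) := by
            rw [Finset.sum_const, Finset.card_univ, Fintype.card_fin, nsmul_eq_mul]
        _ = ENNReal.ofReal ((N:ℝ) * (V * (L:ℝ)^(-α))) := by
            rw [ENNReal.ofReal_mul (Nat.cast_nonneg N), ENNReal.ofReal_natCast]
    · refine (meas_ge_le_variance_div_sq hSmem ht).trans ?_
      apply ENNReal.ofReal_le_ofReal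
      exact div_le_div_of_nonneg_right hvar (by positivity)
  · intro ω hω A
    simp only [Set.mem_union, Set.mem_iUnion, Set.mem_setOf_eq, not_or, not_exists,
      not_le] at hω
    obtain ⟨hω1, hω2⟩ := hω
    have hSub : S ω ≤ P[S] + t := by
      have := abs_lt.mp hω2
      linarith [this.2]
    have hterm : ∀ i, (ξ i ω : ℝ) ≤ (l0:ℝ) + X i ω := by
      intro i
      have hξL : ξ i ω ≤ L := le_of_lt (hω1 i)
      have : ξ i ω ≤ l0 + F (ξ i ω) := by
        rw [hF]; dsimp only; split <;> omega
      calc (ξ i ω : ℝ) ≤ ((l0 + F (ξ i ω) : ℕ) : ℝ) := by exact_mod_cast this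
        _ = (l0:ℝ) + X i ω := by push_cast; rfl
    calc ∑ i ∈ A, (ξ i ω : ℝ) ≤ ∑ i ∈ A, ((l0:ℝ) + X i ω) := Finset.sum_le_sum fun i _ => hterm i
      _ = (A.card:ℝ) * (l0:ℝ) + ∑ i ∈ A, X i ω := by
          rw [Finset.sum_add_distrib, Finset.sum_const, nsmul_eq_mul]
      _ ≤ (A.card:ℝ) * (l0:ℝ) + S ω := by
          have : ∑ i ∈ A, X i ω ≤ ∑ i ∈ Finset.univ, X i ω :=
            Finset.sum_le_sum_of_subset_of_nonneg (Finset.subset_univ A)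
              (fun i _ _ => hXnonneg i ω)
          rw [hSapp ω]
          linarith
      _ ≤ (A.card:ℝ) * (l0:ℝ) + (P[S] + t) := by linarith
      _ ≤ _ := by linarith [hmean]

/-- **Uniform bound on sums over small subsets.**  Let `c, V > 0`, `α > 1` and
`0 < β < 1` be constants, and for each `n` let `ξ n 1, …, ξ n ⌈cn⌉` be
independent positive integer-valued random variables with
`Pr[ξ n i ≥ ℓ] ≤ V ℓ^{−α}` for all integers `ℓ ≥ 1`.  Then there is a constant
`C > 0` such that, with probability tending to `1` as `n → ∞`, every subset
`A ⊆ {1, …, ⌈cn⌉}` of size `⌈n^β⌉` satisfies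
`∑_{i ∈ A} ξ n i ≤ C n^{β + (1−β)/α}`. -/
theorem sum_over_subset_bound (c V α β : ℝ)
    (hc : 0 < c) (hV : 0 < V) (hα : 1 < α) (hβ0 : 0 < β) (hβ1 : β < 1)
    (Ω : ℕ → Type*) [∀ n, MeasurableSpace (Ω n)]
    (P : ∀ n, Measure (Ω n)) [∀ n, IsProbabilityMeasure (P n)]
    (ξ : ∀ n : ℕ, Fin ⌈c * n⌉₊ → Ω n → ℕ)
    (hmeas : ∀ n i, Measurable (ξ n i))
    (hpos : ∀ n i, ∀ᵐ ω ∂P n, 1 ≤ ξ n i ω)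
    (hindep : ∀ n, iIndepFun (ξ n) (P n))
    (htail : ∀ n i, ∀ ℓ : ℕ, 1 ≤ ℓ →
      P n {ω | ℓ ≤ ξ n i ω} ≤ ENNReal.ofReal (V * (ℓ : ℝ) ^ (-α))) :
    ∃ C : ℝ, 0 < C ∧
      Tendsto (fun n => P n {ω |
          ∀ A : Finset (Fin ⌈c * n⌉₊), A.card = ⌈(n : ℝ) ^ β⌉₊ →
            (∑ i ∈ A, (ξ n i ω : ℝ)) ≤ C * (n : ℝ) ^ (β + (1 - β) / α)})
        atTop (nhds 1) := by
  classical
  obtain ⟨D, hD, δ, hδ, hrate⟩ := var_rate (c := c) (V := V) (α := α) (β := β) hc hV hα hβ0 hβ1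
  have hα1 : (0:ℝ) < 1/(α-1) := div_pos one_pos (by linarith)
  have hK1pos : (0:ℝ) < V*(1+1/(α-1))*(c+1) :=
    mul_pos (mul_pos hV (by linarith)) (by linarith)
  refine ⟨5 + V*(1+1/(α-1))*(c+1), by linarith, ?_⟩
  have hαβ : (0:ℝ) < β*(α-1) := mul_pos hβ0 (by linarith)
  -- the error sequence
  set err : ℕ → ℝ := fun n => (c+1)*V*(n:ℝ)^(β*(1-α)) + D*(n:ℝ)^(-δ) with herrdef
  have herrnonneg : ∀ n : ℕ, 0 ≤ err n := by
    intro n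
    apply add_nonneg
    · exact mul_nonneg (mul_nonneg (by linarith) hV.le) (Real.rpow_nonneg (Nat.cast_nonneg _) _)
    · exact mul_nonneg hD.le (Real.rpow_nonneg (Nat.cast_nonneg _) _)
  -- the key estimate for every n ≥ 1
  have key : ∀ n : ℕ, 1 ≤ n →
      1 - ENNReal.ofReal (err n) ≤ P n {ω |
          ∀ A : Finset (Fin ⌈c * n⌉₊), A.card = ⌈(n : ℝ) ^ β⌉₊ →
            (∑ i ∈ A, (ξ n i ω : ℝ))
              ≤ (5 + V*(1+1/(α-1))*(c+1)) * (n : ℝ) ^ (β + (1 - β) / α)} := by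
    intro n hn
    have hnR : (1:ℝ) ≤ (n:ℝ) := by exact_mod_cast hn
    have hnpos : (0:ℝ) < (n:ℝ) := by linarith
    have hγ0 : (0:ℝ) < (1-β)/α := div_pos (by linarith) (by linarith)
    have hρ0 : (0:ℝ) < β + (1-β)/α := by linarith
    have hl0 : 1 ≤ ⌈(n:ℝ)^((1-β)/α)⌉₊ :=
      Nat.one_le_ceil_iff.mpr (Real.rpow_pos_of_pos hnpos _)
    have hL1 : 1 ≤ ⌈(n:ℝ)^(β+(1-β)/α)⌉₊ :=
      Nat.one_le_ceil_iff.mpr (Real.rpow_pos_of_pos hnpos _)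
    obtain ⟨B, hBmeas, hBle, hBprop⟩ := one_n (P n) hV hα (ξ n) (hmeas n)
      (fun i j hij => (hindep n).indepFun hij) (htail n)
      ⌈(n:ℝ)^((1-β)/α)⌉₊ ⌈(n:ℝ)^(β+(1-β)/α)⌉₊ hl0 hL1
      ((n:ℝ)^(β+(1-β)/α)) (Real.rpow_pos_of_pos hnpos _)
    -- bound the probability of the bad set
    have hPB : P n B ≤ ENNReal.ofReal (err n) := by
      refine hBle.trans ?_
      have h1 := bad1_rate (c := c) (V := V) (α := α) (β := β) hc hV hα hβ0 hβ1 n hn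
      have h2 : ((⌈c * (n:ℝ)⌉₊:ℝ) * (2*V*((⌈(n:ℝ)^((1-β)/α)⌉₊:ℝ)^(2-α)
            + ∑ ℓ ∈ Finset.Ioc ⌈(n:ℝ)^((1-β)/α)⌉₊ ⌈(n:ℝ)^(β+(1-β)/α)⌉₊, (ℓ:ℝ)^(1-α))))
              / ((n:ℝ)^(β+(1-β)/α))^2 ≤ D*(n:ℝ)^(-δ) := by
        rw [div_le_iff₀ (by positivity)]
        exact hrate n hn
      calc ENNReal.ofReal ((⌈c * (n:ℝ)⌉₊:ℝ) * (V * ((⌈(n:ℝ)^(β+(1-β)/α)⌉₊:ℝ))^(-α)))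
            + ENNReal.ofReal ((⌈c * (n:ℝ)⌉₊:ℝ) * (2*V*((⌈(n:ℝ)^((1-β)/α)⌉₊:ℝ)^(2-α)
              + ∑ ℓ ∈ Finset.Ioc ⌈(n:ℝ)^((1-β)/α)⌉₊ ⌈(n:ℝ)^(β+(1-β)/α)⌉₊, (ℓ:ℝ)^(1-α)))
                / ((n:ℝ)^(β+(1-β)/α))^2)
          ≤ ENNReal.ofReal ((c+1)*V*(n:ℝ)^(β*(1-α))) + ENNReal.ofReal (D*(n:ℝ)^(-δ)) :=
            add_le_add (ENNReal.ofReal_le_ofReal h1) (ENNReal.ofReal_le_ofReal h2)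
        _ = ENNReal.ofReal (err n) := by
            rw [herrdef]
            exact (ENNReal.ofReal_add
              (mul_nonneg (mul_nonneg (by linarith) hV.le)
                (Real.rpow_nonneg (Nat.cast_nonneg _) _))
              (mul_nonneg hD.le (Real.rpow_nonneg (Nat.cast_nonneg _) _))).symm
    -- the good event is contained in the target event
    have hBc : Bᶜ ⊆ {ω |
        ∀ A : Finset (Fin ⌈c * n⌉₊), A.card = ⌈(n : ℝ) ^ β⌉₊ →
          (∑ i ∈ A, (ξ n i ω : ℝ))
            ≤ (5 + V*(1+1/(α-1))*(c+1)) * (n : ℝ) ^ (β + (1 - β) / α)} := by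
      intro ω hω
      intro A hA
      have hb := hBprop ω hω A
      rw [hA] at hb
      have hd := det_rate (β := β) (α := α) hβ0 hβ1 hα n hn
      have hm := mean_rate (c := c) (V := V) (α := α) (β := β) hc hV hα hβ0 hβ1 n hn
      calc ∑ i ∈ A, (ξ n i ω : ℝ)
          ≤ (⌈(n:ℝ)^β⌉₊:ℝ) * (⌈(n:ℝ)^((1-β)/α)⌉₊:ℝ)
            + ((⌈c * (n:ℝ)⌉₊:ℝ) * (V * ((⌈(n:ℝ)^((1-β)/α)⌉₊:ℝ)^(1-α)
              + (⌈(n:ℝ)^((1-β)/α)⌉₊:ℝ)^(1-α)/(α-1)))) + (n:ℝ)^(β+(1-β)/α) := hb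
        _ ≤ 4*(n:ℝ)^(β+(1-β)/α) + (V*(1+1/(α-1))*(c+1))*(n:ℝ)^(β+(1-β)/α)
            + (n:ℝ)^(β+(1-β)/α) := by
            have := add_le_add (add_le_add hd hm) (le_refl ((n:ℝ)^(β+(1-β)/α)))
            linarith
        _ = (5 + V*(1+1/(α-1))*(c+1)) * (n : ℝ) ^ (β + (1 - β) / α) := by ring
    -- measurability of the target event
    have hEmeas : MeasurableSet {ω |
        ∀ A : Finset (Fin ⌈c * n⌉₊), A.card = ⌈(n : ℝ) ^ β⌉₊ →
          (∑ i ∈ A, (ξ n i ω : ℝ))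
            ≤ (5 + V*(1+1/(α-1))*(c+1)) * (n : ℝ) ^ (β + (1 - β) / α)} := by
      have hrw : {ω |
          ∀ A : Finset (Fin ⌈c * n⌉₊), A.card = ⌈(n : ℝ) ^ β⌉₊ →
            (∑ i ∈ A, (ξ n i ω : ℝ))
              ≤ (5 + V*(1+1/(α-1))*(c+1)) * (n : ℝ) ^ (β + (1 - β) / α)}
          = ⋂ A : Finset (Fin ⌈c * n⌉₊), {ω | A.card = ⌈(n : ℝ) ^ β⌉₊ →
            (∑ i ∈ A, (ξ n i ω : ℝ))
              ≤ (5 + V*(1+1/(α-1))*(c+1)) * (n : ℝ) ^ (β + (1 - β) / α)} := by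
        ext ω; simp only [Set.mem_setOf_eq, Set.mem_iInter]
      rw [hrw]
      refine MeasurableSet.iInter fun A => ?_
      by_cases hcA : A.card = ⌈(n : ℝ) ^ β⌉₊
      · have : {ω | A.card = ⌈(n : ℝ) ^ β⌉₊ →
            (∑ i ∈ A, (ξ n i ω : ℝ))
              ≤ (5 + V*(1+1/(α-1))*(c+1)) * (n : ℝ) ^ (β + (1 - β) / α)}
            = {ω | (∑ i ∈ A, (ξ n i ω : ℝ))
              ≤ (5 + V*(1+1/(α-1))*(c+1)) * (n : ℝ) ^ (β + (1 - β) / α)} := by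
          ext ω; simp [hcA]
        rw [this]
        apply measurableSet_le _ measurable_const
        exact Finset.measurable_sum _ fun i _ =>
          (measurable_from_nat (f := (Nat.cast : ℕ → ℝ))).comp (hmeas n i)
      · have : {ω | A.card = ⌈(n : ℝ) ^ β⌉₊ →
            (∑ i ∈ A, (ξ n i ω : ℝ))
              ≤ (5 + V*(1+1/(α-1))*(c+1)) * (n : ℝ) ^ (β + (1 - β) / α)}
            = Set.univ := by
          ext ω; simp [hcA]
        rw [this]
        exact MeasurableSet.univ
    -- conclude the key estimate
    have hsub : {ω |
        ∀ A : Finset (Fin ⌈c * n⌉₊), A.card = ⌈(n : ℝ) ^ β⌉₊ →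
          (∑ i ∈ A, (ξ n i ω : ℝ))
            ≤ (5 + V*(1+1/(α-1))*(c+1)) * (n : ℝ) ^ (β + (1 - β) / α)}ᶜ ⊆ B :=
      Set.compl_subset_comm.mpr hBc
    have hcompl : P n ({ω |
        ∀ A : Finset (Fin ⌈c * n⌉₊), A.card = ⌈(n : ℝ) ^ β⌉₊ →
          (∑ i ∈ A, (ξ n i ω : ℝ))
            ≤ (5 + V*(1+1/(α-1))*(c+1)) * (n : ℝ) ^ (β + (1 - β) / α)}ᶜ)
        ≤ ENNReal.ofReal (err n) := ((measure_mono hsub).trans hPB)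
    have heq := prob_compl_eq_one_sub (μ := P n) hEmeas.compl
    rw [compl_compl] at heq
    rw [heq]
    exact tsub_le_tsub_left hcompl 1
  -- limit of the error sequence
  have h1 : Tendsto (fun n : ℕ => (n:ℝ)^(β*(1-α))) atTop (nhds 0) := by
    have := (tendsto_rpow_neg_atTop (y := β*(α-1)) hαβ).comp
      (tendsto_natCast_atTop_atTop (R := ℝ))
    simpa [Function.comp_def, show -(β*(α-1)) = β*(1-α) from by ring] using this
  have h2 : Tendsto (fun n : ℕ => (n:ℝ)^(-δ)) atTop (nhds 0) := by
    exact (tendsto_rpow_neg_atTop hδ).comp (tendsto_natCast_atTop_atTop (R := ℝ))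
  have herr0 : Tendsto err atTop (nhds 0) := by
    rw [herrdef]
    have := (h1.const_mul ((c+1)*V)).add (h2.const_mul D)
    simpa using this
  have hofReal : Tendsto (fun n => ENNReal.ofReal (err n)) atTop (nhds 0) := by
    have := ENNReal.tendsto_ofReal herr0
    simpa using this
  have hone : Tendsto (fun n => 1 - ENNReal.ofReal (err n)) atTop (nhds 1) := by
    have := ENNReal.Tendsto.sub (tendsto_const_nhds (x := (1:ENNReal)))
      hofReal (Or.inl ENNReal.one_ne_top)
    simpa using this
  refine tendsto_of_tendsto_of_tendsto_of_le_of_le' hone tendsto_const_nhds ?_ ?_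
  · filter_upwards [eventually_ge_atTop 1] with n hn
    exact key n hn
  · filter_upwards with n
    exact prob_le_one

end RandomSat
end
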